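/- arXiv:2204.04731 — 12 statements merged into one kernel-verified Lean document; each statement's English description precedes it below -/
import Mathlib

section
/- Let a ≥ 1 and let M = {a, a+1, 2a+1, n} where n ≡ a + l (mod 3a+1) for some 0 ≤ l ≤ a. Then with m = 3a+1, the minimum of |a|_m, |a+1|_m, |2a+1|_m, |n|_m equals a; consequently κ(M) ≥ a/(3a+1). -/
/-- `absMod y m` is the distance from `y` to the nearest multiple of `m`. -/
def absMod (y m : ℕ) : ℕ := min (y % m) (m - y % m)

/-- `S` is an `M`-set: no two (distinct) elements of `S` differ by an element of `M`. -/
def isMSet (M S : Set ℕ) : Prop := ∀ x ∈ S, ∀ y ∈ S, x ≠ y → x - y ∉ M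

/-- The Cantor--Gordon parameter κ(M). -/
noncomputable def kappa (M : Set ℕ) : ℝ :=
  sSup {q : ℝ | ∃ c m : ℕ, 0 < m ∧ Nat.Coprime c m ∧
    q = sInf {r : ℝ | ∃ k ∈ M, r = (absMod (c * k) m : ℝ)} / m}

/-- Upper asymptotic density of a set of nonnegative integers. -/
noncomputable def upperDensity (S : Set ℕ) : ℝ :=
  Filter.limsup (fun x : ℕ => ((S ∩ Set.Iic x).ncard : ℝ) / x) Filter.atTop

/-- Motzkin's maximal density μ(M) over all M-sets. -/
noncomputable def mu (M : Set ℕ) : ℝ :=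
  sSup {d : ℝ | ∃ S : Set ℕ, isMSet M S ∧ d = upperDensity S}

lemma absMod_le (y m : ℕ) (hm : 0 < m) : absMod y m ≤ m := by
  have := Nat.mod_lt y hm
  unfold absMod; omega

lemma kappa_bddAbove (M : Set ℕ) (k₀ : ℕ) (hk₀ : k₀ ∈ M) :
    BddAbove {q : ℝ | ∃ c m : ℕ, 0 < m ∧ Nat.Coprime c m ∧
      q = sInf {r : ℝ | ∃ k ∈ M, r = (absMod (c * k) m : ℝ)} / m} := by
  refine ⟨1, ?_⟩
  rintro q ⟨c, m, hm, _, rfl⟩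
  have hmem : ((absMod (c * k₀) m : ℝ)) ∈
      {r : ℝ | ∃ k ∈ M, r = (absMod (c * k) m : ℝ)} := ⟨k₀, hk₀, rfl⟩
  have hbdd : BddBelow {r : ℝ | ∃ k ∈ M, r = (absMod (c * k) m : ℝ)} := by
    refine ⟨0, ?_⟩
    rintro r ⟨k, _, rfl⟩
    exact Nat.cast_nonneg _
  have h1 : sInf {r : ℝ | ∃ k ∈ M, r = (absMod (c * k) m : ℝ)} ≤
      (absMod (c * k₀) m : ℝ) := csInf_le hbdd hmem
  have h2 : (absMod (c * k₀) m : ℝ) ≤ m := by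
    exact_mod_cast absMod_le _ _ hm
  have hm' : (0 : ℝ) < m := by exact_mod_cast hm
  rw [div_le_one hm']
  exact h1.trans h2

theorem stmt0 (a n : ℕ) (ha : 1 ≤ a)
    (hn : ∃ l ≤ a, n % (3*a+1) = (a + l) % (3*a+1)) :
    min (min (absMod a (3*a+1)) (absMod (a+1) (3*a+1)))
      (min (absMod (2*a+1) (3*a+1)) (absMod n (3*a+1))) = a ∧
    kappa {a, a+1, 2*a+1, n} ≥ (a : ℝ) / (3*a+1) := by
  obtain ⟨l, hl, hnl⟩ := hn
  have h1 : absMod a (3*a+1) = a := by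
    unfold absMod; rw [Nat.mod_eq_of_lt (by omega)]; omega
  have h2 : absMod (a+1) (3*a+1) = a+1 := by
    unfold absMod; rw [Nat.mod_eq_of_lt (by omega)]; omega
  have h3 : absMod (2*a+1) (3*a+1) = a := by
    unfold absMod; rw [Nat.mod_eq_of_lt (by omega)]; omega
  have h4 : a ≤ absMod n (3*a+1) := by
    unfold absMod
    rw [hnl, Nat.mod_eq_of_lt (by omega)]
    omega
  refine ⟨by omega, ?_⟩
  set M : Set ℕ := {a, a+1, 2*a+1, n} with hM
  have haM : a ∈ M := Or.inl rfl
  set R : Set ℝ := {r : ℝ | ∃ k ∈ M, r = (absMod (1 * k) (3*a+1) : ℝ)} with hR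
  have hRa : ((a : ℕ) : ℝ) ∈ R := by
    refine ⟨a, haM, ?_⟩
    rw [one_mul, h1]
  have hlb : ∀ r ∈ R, (a : ℝ) ≤ r := by
    rintro r ⟨k, hk, rfl⟩
    rw [one_mul]
    rcases hk with rfl | rfl | rfl | rfl
    · rw [h1]
    · rw [h2]; exact_mod_cast Nat.le_succ a
    · rw [h3]
    · exact_mod_cast h4
  have hInf : sInf R = (a : ℝ) := by
    apply le_antisymm
    · exact csInf_le ⟨(a : ℝ), hlb⟩ hRa
    · exact le_csInf ⟨_, hRa⟩ hlb
  have hmem : (a : ℝ) / (3*a+1) ∈ {q : ℝ | ∃ c m : ℕ, 0 < m ∧ Nat.Coprime c m ∧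
      q = sInf {r : ℝ | ∃ k ∈ M, r = (absMod (c * k) m : ℝ)} / m} := by
    refine ⟨1, 3*a+1, by omega, Nat.coprime_one_left _, ?_⟩
    rw [← hR, hInf]
    push_cast
    ring
  have := le_csSup (kappa_bddAbove M a haM) hmem
  unfold kappa
  exact this
end

section
/- Let a ≥ 1 and M = {a, a+1, 2a+1, n} with n > 3a. If S is a set of nonnegative integers with 0 ∈ S such that no two elements of S differ by an element of M, then S contains at most a elements in the interval [0, 3a]. -/
theorem stmt1 (a n : ℕ) (ha : 1 ≤ a) (hn : 3*a < n) (S : Set ℕ)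
    (h0 : 0 ∈ S) (hS : isMSet {a, a+1, 2*a+1, n} S) :
    (S ∩ Set.Icc 0 (3*a)).ncard ≤ a := by
  classical
  set f : ℕ → ℕ := fun x => if x ≤ a then x else if x ≤ 2*a+1 then x - (a+1) else x - (2*a+1)
    with hf
  have hdiff : ∀ d, d ∈ ({a, a+1, 2*a+1} : Set ℕ) → d ∈ ({a, a+1, 2*a+1, n} : Set ℕ) := by
    intro d hd
    simp only [Set.mem_insert_iff, Set.mem_singleton_iff] at hd ⊢
    tauto
  have hkey : ∀ x ∈ S, ∀ y ∈ S, x < y → y - x ≠ a ∧ y - x ≠ a+1 ∧ y - x ≠ 2*a+1 := by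
    intro x hx y hy hxy
    have := hS y hy x hx (by omega)
    refine ⟨?_, ?_, ?_⟩ <;> intro h <;> exact this (by rw [h]; apply hdiff; simp)
  have hna : a ∉ S := fun h => (hkey 0 h0 a h (by omega)).1 (by omega)
  have hna1 : (a+1) ∉ S := fun h => (hkey 0 h0 (a+1) h (by omega)).2.1 (by omega)
  have hn2a : (2*a+1) ∉ S := fun h => (hkey 0 h0 (2*a+1) h (by omega)).2.2 (by omega)
  have hinj : Set.InjOn f (S ∩ Set.Icc 0 (3*a)) := by
    rintro x ⟨hxS, _, hx3⟩ y ⟨hyS, _, hy3⟩ hfxy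
    by_contra hne
    rcases Nat.lt_or_ge x y with hlt | hge
    · have := hkey x hxS y hyS hlt
      simp only [hf] at hfxy
      split_ifs at hfxy <;> omega
    · have hlt : y < x := by omega
      have := hkey y hyS x hxS hlt
      simp only [hf] at hfxy
      split_ifs at hfxy <;> omega
  have hsub : f '' (S ∩ Set.Icc 0 (3*a)) ⊆ Set.Iio a := by
    rintro _ ⟨x, ⟨hxS, _, hx3⟩, rfl⟩
    have h1 : x ≠ a := fun h => hna (h ▸ hxS)
    have h2 : x ≠ a+1 := fun h => hna1 (h ▸ hxS)
    have h3 : x ≠ 2*a+1 := fun h => hn2a (h ▸ hxS)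
    simp only [Set.mem_Iio, hf]
    split_ifs <;> omega
  calc (S ∩ Set.Icc 0 (3*a)).ncard = (f '' (S ∩ Set.Icc 0 (3*a))).ncard :=
        (Set.ncard_image_of_injOn hinj).symm
    _ ≤ (Set.Iio a).ncard := Set.ncard_le_ncard hsub (Set.finite_Iio a)
    _ = a := by rw [← Finset.coe_Iio, Set.ncard_coe_finset, Nat.card_Iio]
end

section
/- Let a ≥ 1 and M = {a, a+1, 2a+1, n} with n > 3a and n ≡ a + l (mod 3a+1) for some 0 ≤ l ≤ a. Then the maximal upper density of M-sets equals a/(3a+1). -/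
open Filter

/-- Any M-set has at most `a` elements in any window of length `3a+1`. -/
lemma window_bound (a : ℕ) (ha : 1 ≤ a) {M S : Set ℕ} (hS : isMSet M S)
    (haM : a ∈ M) (ha1M : a+1 ∈ M) (h2aM : 2*a+1 ∈ M) (t : ℕ) :
    (S ∩ Set.Icc t (t+3*a)).ncard ≤ a := by
  set T := S ∩ Set.Icc t (t+3*a) with hT
  rcases T.eq_empty_or_nonempty with hE | hne
  · simp [hE]
  have hTsub : T ⊆ Set.Icc t (t+3*a) := Set.inter_subset_right
  set t0 := sInf T with ht0def
  have ht0 : t0 ∈ T := Nat.sInf_mem hne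
  have hmin : ∀ s ∈ T, t0 ≤ s := fun s hs => Nat.sInf_le hs
  have hdiff : ∀ s1 ∈ T, ∀ s2 ∈ T, s1 ≠ s2 →
      s1 - s2 ≠ a ∧ s1 - s2 ≠ a+1 ∧ s1 - s2 ≠ 2*a+1 := by
    intro s1 hs1 s2 hs2 hne12
    have h := hS s1 hs1.1 s2 hs2.1 hne12
    exact ⟨fun h' => h (h' ▸ haM), fun h' => h (h' ▸ ha1M), fun h' => h (h' ▸ h2aM)⟩
  have key : T.ncard ≤ (↑(Finset.range a) : Set ℕ).ncard := by
    apply Set.ncard_le_ncard_of_injOn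
      (fun s => if s - t0 < a then s - t0 else
        if s - t0 < 2*a+1 then s - t0 - (a+1) else s - t0 - (2*a+1))
    · intro s hs
      simp only [Finset.coe_range, Set.mem_Iio]
      have hb1 := hTsub hs
      have hb0 := hTsub ht0
      have hle := hmin s hs
      simp only [Set.mem_Icc] at hb1 hb0
      rcases eq_or_ne s t0 with rfl | hne'
      · split_ifs <;> omega
      · have hd := hdiff s hs t0 ht0 hne'
        split_ifs <;> omega
    · intro s1 hs1 s2 hs2 hg
      simp only at hg
      by_contra hne12
      have hb1 := hTsub hs1
      have hb2 := hTsub hs2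
      have hb0 := hTsub ht0
      simp only [Set.mem_Icc] at hb1 hb2 hb0
      have hle1 := hmin s1 hs1
      have hle2 := hmin s2 hs2
      have h12 := hdiff s1 hs1 s2 hs2 hne12
      have h21 := hdiff s2 hs2 s1 hs1 (Ne.symm hne12)
      have hd1 : s1 = t0 ∨ (s1 - t0 ≠ a ∧ s1 - t0 ≠ a+1 ∧ s1 - t0 ≠ 2*a+1) := by
        rcases eq_or_ne s1 t0 with h | h
        · exact Or.inl h
        · exact Or.inr (hdiff s1 hs1 t0 ht0 h)
      have hd2 : s2 = t0 ∨ (s2 - t0 ≠ a ∧ s2 - t0 ≠ a+1 ∧ s2 - t0 ≠ 2*a+1) := by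
        rcases eq_or_ne s2 t0 with h | h
        · exact Or.inl h
        · exact Or.inr (hdiff s2 hs2 t0 ht0 h)
      split_ifs at hg <;> omega
  rwa [Set.ncard_coe_finset, Finset.card_range] at key

/-- Counting bound for any M-set. -/
lemma count_bound (a : ℕ) (ha : 1 ≤ a) {M S : Set ℕ} (hS : isMSet M S)
    (haM : a ∈ M) (ha1M : a+1 ∈ M) (h2aM : 2*a+1 ∈ M) (x : ℕ) :
    (S ∩ Set.Iic x).ncard ≤ a * (x / (3*a+1) + 1) := by
  induction x using Nat.strong_induction_on with
  | _ x IH =>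
    rcases lt_or_ge x (3*a+1) with hx | hx
    · have hsub : S ∩ Set.Iic x ⊆ S ∩ Set.Icc 0 (0+3*a) := by
        intro y hy
        exact ⟨hy.1, Nat.zero_le y, by have := hy.2; simp only [Set.mem_Iic] at this; omega⟩
      have h1 := Set.ncard_le_ncard hsub ((Set.finite_Icc _ _).inter_of_right _)
      have hw := window_bound a ha hS haM ha1M h2aM 0
      have h0 : x / (3*a+1) = 0 := Nat.div_eq_of_lt hx
      calc (S ∩ Set.Iic x).ncard ≤ a := le_trans h1 hw
        _ ≤ a * (x / (3*a+1) + 1) := by rw [h0]; omega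
    · have hsplit : S ∩ Set.Iic x ⊆
          (S ∩ Set.Iic (x - (3*a+1))) ∪ (S ∩ Set.Icc (x - 3*a) ((x - 3*a) + 3*a)) := by
        intro y hy
        have hy2 := hy.2
        simp only [Set.mem_Iic] at hy2
        rcases le_or_gt y (x - (3*a+1)) with h | h
        · exact Or.inl ⟨hy.1, h⟩
        · exact Or.inr ⟨hy.1, by omega, by omega⟩
      have hfin1 : (S ∩ Set.Iic (x - (3*a+1))).Finite := (Set.finite_Iic _).inter_of_right _
      have hfin2 : (S ∩ Set.Icc (x - 3*a) ((x - 3*a) + 3*a)).Finite :=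
        (Set.finite_Icc _ _).inter_of_right _
      have h1 := Set.ncard_le_ncard hsplit (hfin1.union hfin2)
      have h2 := Set.ncard_union_le (S ∩ Set.Iic (x - (3*a+1)))
        (S ∩ Set.Icc (x - 3*a) ((x - 3*a) + 3*a))
      have h3 := IH (x - (3*a+1)) (by omega)
      have h4 := window_bound a ha hS haM ha1M h2aM (x - 3*a)
      have hdivx : x / (3*a+1) = (x - (3*a+1)) / (3*a+1) + 1 :=
        Nat.div_eq_sub_div (by omega) hx
      calc (S ∩ Set.Iic x).ncard
          ≤ (S ∩ Set.Iic (x - (3*a+1))).ncard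
            + (S ∩ Set.Icc (x - 3*a) ((x - 3*a) + 3*a)).ncard := le_trans h1 h2
        _ ≤ a * ((x - (3*a+1)) / (3*a+1) + 1) + a := Nat.add_le_add h3 h4
        _ = a * (x / (3*a+1) + 1) := by rw [hdivx]; ring

/-- Upper density bound for any M-set. -/
lemma density_le (a : ℕ) (ha : 1 ≤ a) {M S : Set ℕ} (hS : isMSet M S)
    (haM : a ∈ M) (ha1M : a+1 ∈ M) (h2aM : 2*a+1 ∈ M) :
    upperDensity S ≤ (a : ℝ) / (3*a+1) := by
  unfold upperDensity
  have hm : (0:ℝ) < 3*(a:ℝ)+1 := by positivity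
  have htend : Filter.Tendsto (fun x : ℕ => (a:ℝ)/(3*(a:ℝ)+1) + (a:ℝ) / x) atTop
      (nhds ((a:ℝ)/(3*(a:ℝ)+1))) := by
    have h0 := tendsto_const_div_atTop_nhds_zero_nat (a:ℝ)
    have := (tendsto_const_nhds (α := ℕ) (f := atTop) (x := (a:ℝ)/(3*(a:ℝ)+1))).add h0
    simpa using this
  have hb : IsBoundedUnder (· ≤ ·) atTop (fun x : ℕ => (a:ℝ)/(3*(a:ℝ)+1) + (a:ℝ) / x) :=
    htend.isBoundedUnder_le
  have hcob : IsCoboundedUnder (· ≤ ·) atTop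
      (fun x : ℕ => ((S ∩ Set.Iic x).ncard : ℝ) / x) := by
    apply Filter.isCoboundedUnder_le_of_le atTop (x := 0)
    intro x
    positivity
  have hle : (fun x : ℕ => ((S ∩ Set.Iic x).ncard : ℝ) / x) ≤ᶠ[atTop]
      (fun x : ℕ => (a:ℝ)/(3*(a:ℝ)+1) + (a:ℝ) / x) := by
    filter_upwards [eventually_ge_atTop 1] with x hx
    have hxpos : (0:ℝ) < x := by exact_mod_cast hx
    have hcount := count_bound a ha hS haM ha1M h2aM x
    have hc : ((S ∩ Set.Iic x).ncard : ℝ) ≤ (a:ℝ) * ((x / (3*a+1) : ℕ) : ℝ) + a := by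
      have : ((S ∩ Set.Iic x).ncard : ℝ) ≤ ((a * (x / (3*a+1) + 1) : ℕ) : ℝ) := by
        exact_mod_cast hcount
      push_cast at this
      linarith
    have hcast : ((x / (3*a+1) : ℕ) : ℝ) ≤ (x:ℝ) / (3*(a:ℝ)+1) := by
      have := Nat.cast_div_le (α := ℝ) (m := x) (n := 3*a+1)
      push_cast at this
      convert this using 2 <;> push_cast <;> ring
    have hc2 : ((S ∩ Set.Iic x).ncard : ℝ) ≤ (a:ℝ)/(3*(a:ℝ)+1) * x + a := by
      have h1 : (a:ℝ) * ((x / (3*a+1) : ℕ) : ℝ) ≤ (a:ℝ) * ((x:ℝ) / (3*(a:ℝ)+1)) := by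
        apply mul_le_mul_of_nonneg_left hcast (by positivity)
      have h2 : (a:ℝ) * ((x:ℝ) / (3*(a:ℝ)+1)) = (a:ℝ)/(3*(a:ℝ)+1) * x := by ring
      linarith
    rw [div_le_iff₀ hxpos]
    calc ((S ∩ Set.Iic x).ncard : ℝ) ≤ (a:ℝ)/(3*(a:ℝ)+1) * x + a := hc2
      _ = ((a:ℝ)/(3*(a:ℝ)+1) + (a:ℝ)/x) * x := by field_simp
  calc Filter.limsup (fun x : ℕ => ((S ∩ Set.Iic x).ncard : ℝ) / x) atTop
      ≤ Filter.limsup (fun x : ℕ => (a:ℝ)/(3*(a:ℝ)+1) + (a:ℝ) / x) atTop :=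
        Filter.limsup_le_limsup hle hcob hb
    _ = (a:ℝ)/(3*(a:ℝ)+1) := htend.limsup_eq

/-- The canonical M-set of density a/(3a+1). -/
lemma S0_isMSet (a n : ℕ) (ha : 1 ≤ a) (hn : 3*a < n)
    (hl : ∃ l ≤ a, n % (3*a+1) = (a + l) % (3*a+1)) :
    isMSet {a, a+1, 2*a+1, n} {y : ℕ | y % (3*a+1) < a} := by
  obtain ⟨l, hla, hlmod⟩ := hl
  intro x hx y hy hxy hmem
  simp only [Set.mem_setOf_eq] at hx hy
  simp only [Set.mem_insert_iff, Set.mem_singleton_iff] at hmem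
  have hr : ∃ r, a ≤ r ∧ r ≤ 2*a ∨ a ≤ r ∧ r ≤ 2*a+1 := ⟨a, Or.inl ⟨le_refl _, by omega⟩⟩
  have hd : ∃ r, a ≤ r ∧ r ≤ 2*a+1 ∧ (x - y) % (3*a+1) = r := by
    rcases hmem with h|h|h|h
    · exact ⟨a, le_refl _, by omega, by rw [h]; exact Nat.mod_eq_of_lt (by omega)⟩
    · exact ⟨a+1, by omega, by omega, by rw [h]; exact Nat.mod_eq_of_lt (by omega)⟩
    · exact ⟨2*a+1, by omega, by omega, by rw [h]; exact Nat.mod_eq_of_lt (by omega)⟩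
    · refine ⟨a + l, by omega, by omega, ?_⟩
      rw [h, hlmod]
      exact Nat.mod_eq_of_lt (by omega)
  obtain ⟨r, hr1, hr2, hr3⟩ := hd
  rcases Nat.lt_or_ge x y with h | h
  · have hz : x - y = 0 := by omega
    rw [hz, Nat.zero_mod] at hr3
    omega
  · have hxeq : x = y + (x - y) := by omega
    have hxm : x % (3*a+1) = y % (3*a+1) + r := by
      conv_lhs => rw [hxeq]
      rw [Nat.add_mod, hr3, Nat.mod_eq_of_lt (by omega : y % (3*a+1) + r < 3*a+1)]
    omega

/-- Lower count bound for the canonical set. -/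
lemma S0_count (a : ℕ) (ha : 1 ≤ a) (t : ℕ) :
    a * t ≤ ({y : ℕ | y % (3*a+1) < a} ∩ Set.Iic ((3*a+1)*t)).ncard := by
  set F : Finset ℕ := (Finset.range t ×ˢ Finset.range a).image
    (fun p => (3*a+1)*p.1 + p.2) with hF
  have hinj : Set.InjOn (fun p : ℕ × ℕ => (3*a+1)*p.1 + p.2)
      ↑(Finset.range t ×ˢ Finset.range a) := by
    intro p hp q hq h
    simp only [Finset.coe_product, Set.mem_prod, Finset.mem_coe, Finset.mem_range] at hp hq
    simp only at h
    have h1 : ((3*a+1)*p.1 + p.2) / (3*a+1) = p.1 := by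
      rw [Nat.mul_add_div (by omega), Nat.div_eq_of_lt (by omega : p.2 < 3*a+1)]
      omega
    have h2 : ((3*a+1)*q.1 + q.2) / (3*a+1) = q.1 := by
      rw [Nat.mul_add_div (by omega), Nat.div_eq_of_lt (by omega : q.2 < 3*a+1)]
      omega
    have hfst : p.1 = q.1 := by rw [← h1, ← h2, h]
    have h' := h
    rw [hfst] at h'
    have hsnd : p.2 = q.2 := Nat.add_left_cancel h'
    exact Prod.ext hfst hsnd
  have hcard : F.card = t * a := by
    rw [hF, Finset.card_image_of_injOn hinj, Finset.card_product,
      Finset.card_range, Finset.card_range]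
  have hsub : (↑F : Set ℕ) ⊆ {y : ℕ | y % (3*a+1) < a} ∩ Set.Iic ((3*a+1)*t) := by
    intro z hz
    simp only [hF, Finset.coe_image, Set.mem_image, Finset.coe_product,
      Set.mem_prod, Finset.mem_coe, Finset.mem_range] at hz
    obtain ⟨p, ⟨hp1, hp2⟩, rfl⟩ := hz
    constructor
    · simp only [Set.mem_setOf_eq]
      rw [Nat.mul_add_mod]
      rw [Nat.mod_eq_of_lt (by omega)]
      exact hp2
    · simp only [Set.mem_Iic]
      have hms : (3*a+1)*(p.1+1) = (3*a+1)*p.1 + (3*a+1) := Nat.mul_succ _ _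
      have h2 : (3*a+1)*(p.1+1) ≤ (3*a+1)*t := Nat.mul_le_mul_left _ (by omega)
      omega
  have := Set.ncard_le_ncard hsub ((Set.finite_Iic _).inter_of_right _)
  rw [Set.ncard_coe_finset, hcard] at this
  exact le_trans (le_of_eq (Nat.mul_comm a t)) this

lemma S0_density_ge (a : ℕ) (ha : 1 ≤ a) :
    (a : ℝ) / (3*(a:ℝ)+1) ≤ upperDensity {y : ℕ | y % (3*a+1) < a} := by
  unfold upperDensity
  set S := {y : ℕ | y % (3*a+1) < a} with hSdef
  apply Filter.le_limsup_of_frequently_le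
  · rw [Filter.frequently_atTop]
    intro N
    refine ⟨(3*a+1)*(N+1), by nlinarith [Nat.le_refl N], ?_⟩
    have hc := S0_count a ha (N+1)
    have hxpos : (0:ℝ) < ((3*a+1)*(N+1) : ℕ) := by positivity
    rw [le_div_iff₀ hxpos]
    have hcR : ((a*(N+1) : ℕ) : ℝ) ≤ ((S ∩ Set.Iic ((3*a+1)*(N+1))).ncard : ℝ) := by
      exact_mod_cast hc
    have heq : (a:ℝ) / (3*(a:ℝ)+1) * (((3*a+1)*(N+1) : ℕ) : ℝ) = ((a*(N+1) : ℕ) : ℝ) := by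
      push_cast
      field_simp
    rw [heq]
    exact hcR
  · refine ⟨2, ?_⟩
    rw [Filter.eventually_map]
    filter_upwards [Filter.eventually_ge_atTop 1] with x hx
    have hxpos : (0:ℝ) < x := by exact_mod_cast hx
    have hb : (S ∩ Set.Iic x).ncard ≤ x + 1 := by
      have h1 := Set.ncard_le_ncard (Set.inter_subset_right (s := S) (t := Set.Iic x))
        (Set.finite_Iic x)
      have h2 : (Set.Iic x).ncard = x + 1 := by
        have he : (Set.Iic x : Set ℕ) = ↑(Finset.Iic x) := by simp
        rw [he, Set.ncard_coe_finset, Nat.card_Iic]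
      rw [h2] at h1
      omega
    rw [div_le_iff₀ hxpos]
    have h3 : ((S ∩ Set.Iic x).ncard : ℝ) ≤ (x:ℝ) + 1 := by exact_mod_cast hb
    have hx1 : (1:ℝ) ≤ x := by exact_mod_cast hx
    linarith

theorem stmt2 (a n : ℕ) (ha : 1 ≤ a) (hn : 3*a < n)
    (hl : ∃ l ≤ a, n % (3*a+1) = (a + l) % (3*a+1)) :
    mu {a, a+1, 2*a+1, n} = (a : ℝ) / (3*a+1) := by
  have hgoal : ((3*(a:ℕ)+1 : ℕ) : ℝ) = 3*(a:ℝ)+1 := by push_cast; ring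
  have haM : (a:ℕ) ∈ ({a, a+1, 2*a+1, n} : Set ℕ) := by simp
  have ha1M : a+1 ∈ ({a, a+1, 2*a+1, n} : Set ℕ) := by simp
  have h2aM : 2*a+1 ∈ ({a, a+1, 2*a+1, n} : Set ℕ) := by simp
  have hub : ∀ d ∈ {d : ℝ | ∃ S : Set ℕ, isMSet {a, a+1, 2*a+1, n} S ∧ d = upperDensity S},
      d ≤ (a:ℝ) / (3*(a:ℝ)+1) := by
    rintro d ⟨S, hS, rfl⟩
    exact density_le a ha hS haM ha1M h2aM
  have hmem : upperDensity {y : ℕ | y % (3*a+1) < a} ∈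
      {d : ℝ | ∃ S : Set ℕ, isMSet {a, a+1, 2*a+1, n} S ∧ d = upperDensity S} :=
    ⟨_, S0_isMSet a n ha hn hl, rfl⟩
  have hbdd : BddAbove {d : ℝ | ∃ S : Set ℕ, isMSet {a, a+1, 2*a+1, n} S ∧ d = upperDensity S} :=
    ⟨(a:ℝ) / (3*(a:ℝ)+1), hub⟩
  apply le_antisymm
  · exact csSup_le ⟨_, hmem⟩ hub
  · exact le_trans (S0_density_ge a ha) (le_csSup hbdd hmem)
end

section
/- Let a ≥ 1, i ≥ 0, and n = (3a+2)a + (3a+1)i + a + 1 + l with 0 ≤ l ≤ a + ⌊a/3⌋. Then with m = a + n and x = a + 1 + i, the minimum of |a·x|_m, |(a+1)·x|_m, |(2a+1)·x|_m, |n·x|_m equals a(a+1+i); consequently κ({a, a+1, 2a+1, n}) ≥ a(a+1+i)/(a+n). -/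
lemma absMod_le_self (y m : ℕ) : absMod y m ≤ m := by
  unfold absMod
  have := Nat.sub_le m (y % m)
  omega

lemma absMod_mul (g y m : ℕ) : absMod (g*y) (g*m) = g * absMod y m := by
  unfold absMod
  rw [Nat.mul_mod_mul_left, ← Nat.mul_sub, Nat.mul_min_mul_left]

lemma core (a i n : ℕ) (ha : 1 ≤ a) (l : ℕ)
    (hn : n = (3*a+2)*a + (3*a+1)*i + a + 1 + l) :
    absMod (a*(a+1+i)) (a+n) = a*(a+1+i) ∧
    a*(a+1+i) ≤ absMod ((a+1)*(a+1+i)) (a+n) ∧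
    a*(a+1+i) ≤ absMod ((2*a+1)*(a+1+i)) (a+n) ∧
    absMod (n*(a+1+i)) (a+n) = a*(a+1+i) := by
  set x := a+1+i with hx
  set m := a+n with hm
  have hxm : m = (3*a+1)*x + l := by simp only [hm, hx, hn]; ring
  have hx1 : 1 ≤ x := by omega
  have e1 : a*x + (2*a+1)*x = (3*a+1)*x := by ring
  have e2 : (a+1)*x + 2*a*x = (3*a+1)*x := by ring
  have e3 : 2*a*x = a*x + a*x := by ring
  have e4 : (2*a+1)*x = 2*a*x + x := by ring
  have hax_pos : 0 < a*x := Nat.mul_pos ha (by omega)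
  have hmx : m*x = m*(x-1) + m := by
    conv_lhs => rw [show x = (x-1)+1 by omega]
    ring
  have hnx : n*x + a*x = m*x := by rw [hm]; ring
  have h1 : absMod (a*x) m = a*x := by
    have hlt : a*x < m := by omega
    unfold absMod; rw [Nat.mod_eq_of_lt hlt]; omega
  have h2 : a*x ≤ absMod ((a+1)*x) m := by
    have hlt : (a+1)*x < m := by omega
    unfold absMod; rw [Nat.mod_eq_of_lt hlt]; omega
  have h3 : a*x ≤ absMod ((2*a+1)*x) m := by
    have hlt : (2*a+1)*x < m := by omega
    unfold absMod; rw [Nat.mod_eq_of_lt hlt]; omega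
  have h4 : absMod (n*x) m = a*x := by
    have hnx2 : n*x = m*(x-1) + (m - a*x) := by omega
    unfold absMod
    rw [hnx2, Nat.mul_add_mod, Nat.mod_eq_of_lt (by omega)]
    omega
  exact ⟨h1, h2, h3, h4⟩

theorem stmt3 (a i l n : ℕ) (ha : 1 ≤ a) (hl : l ≤ a + a/3)
    (hn : n = (3*a+2)*a + (3*a+1)*i + a + 1 + l) :
    min (min (absMod (a*(a+1+i)) (a+n)) (absMod ((a+1)*(a+1+i)) (a+n)))
      (min (absMod ((2*a+1)*(a+1+i)) (a+n)) (absMod (n*(a+1+i)) (a+n))) = a*(a+1+i) ∧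
    kappa {a, a+1, 2*a+1, n} ≥ (a*(a+1+i) : ℝ) / (a+n) := by
  obtain ⟨h1, h2, h3, h4⟩ := core a i n ha l hn
  constructor
  · omega
  -- part 2
  set x := a+1+i with hx
  set m := a+n with hm
  have hx1 : 1 ≤ x := by omega
  have hmpos : 0 < m := by omega
  set M : Set ℕ := {a, a+1, 2*a+1, n} with hM
  set g := Nat.gcd x m with hg
  have hgx : g ∣ x := Nat.gcd_dvd_left x m
  have hgm : g ∣ m := Nat.gcd_dvd_right x m
  have hgpos : 0 < g := Nat.gcd_pos_of_pos_left m (by omega)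
  obtain ⟨c, hc⟩ := hgx
  obtain ⟨m0, hm0⟩ := hgm
  have hm0pos : 0 < m0 := by
    rcases Nat.eq_zero_or_pos m0 with h | h
    · rw [h, mul_zero] at hm0; omega
    · exact h
  have hcop : Nat.Coprime c m0 := by
    have h1 : c = x / g := by rw [hc]; exact (Nat.mul_div_cancel_left c hgpos).symm
    have h2 : m0 = m / g := by rw [hm0]; exact (Nat.mul_div_cancel_left m0 hgpos).symm
    rw [h1, h2, hg]
    exact Nat.coprime_div_gcd_div_gcd (Nat.gcd_pos_of_pos_left m (by omega))
  -- absMod relation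
  have key : ∀ k : ℕ, absMod (x*k) m = g * absMod (c*k) m0 := by
    intro k
    rw [hc, hm0, mul_assoc]
    exact absMod_mul g (c*k) m0
  -- the inner set
  set S : Set ℝ := {r : ℝ | ∃ k ∈ M, r = (absMod (c * k) m0 : ℝ)} with hS
  have haM : a ∈ M := by simp [hM]
  have hSne : S.Nonempty := ⟨_, a, haM, rfl⟩
  have hSbdd : BddBelow S := by
    refine ⟨0, ?_⟩
    rintro r ⟨k, hk, rfl⟩
    positivity
  have hva : g * absMod (c*a) m0 = a*x := by rw [← key, mul_comm x a]; exact h1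
  have hlow : ∀ k ∈ M, absMod (c*a) m0 ≤ absMod (c*k) m0 := by
    intro k hk
    have : a*x ≤ absMod (x*k) m := by
      simp only [hM, Set.mem_insert_iff, Set.mem_singleton_iff] at hk
      rcases hk with rfl | rfl | rfl | rfl
      · rw [mul_comm x]; exact h1.ge
      · rw [mul_comm x]; exact h2
      · rw [mul_comm x]; exact h3
      · rw [mul_comm x]; exact h4.ge
    rw [key] at this
    rw [← hva] at this
    exact Nat.le_of_mul_le_mul_left this hgpos
  have hsinf : sInf S = (absMod (c*a) m0 : ℝ) := by
    apply le_antisymm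
    · exact csInf_le hSbdd ⟨a, haM, rfl⟩
    · apply le_csInf hSne
      rintro r ⟨k, hk, rfl⟩
      exact_mod_cast hlow k hk
  -- membership in kappa set
  have hmem : ((absMod (c*a) m0 : ℝ) / m0) ∈
      {q : ℝ | ∃ c' m' : ℕ, 0 < m' ∧ Nat.Coprime c' m' ∧
        q = sInf {r : ℝ | ∃ k ∈ M, r = (absMod (c' * k) m' : ℝ)} / m'} :=
    ⟨c, m0, hm0pos, hcop, by rw [← hS, hsinf]⟩
  have hbddAbove : BddAbove {q : ℝ | ∃ c' m' : ℕ, 0 < m' ∧ Nat.Coprime c' m' ∧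
      q = sInf {r : ℝ | ∃ k ∈ M, r = (absMod (c' * k) m' : ℝ)} / m'} := by
    refine ⟨1, ?_⟩
    rintro q ⟨c', m', hm', hcop', rfl⟩
    have hb : BddBelow {r : ℝ | ∃ k ∈ M, r = (absMod (c' * k) m' : ℝ)} := by
      refine ⟨0, ?_⟩
      rintro r ⟨k, hk, rfl⟩
      positivity
    have h1' : sInf {r : ℝ | ∃ k ∈ M, r = (absMod (c' * k) m' : ℝ)} ≤ (absMod (c'*a) m' : ℝ) :=
      csInf_le hb ⟨a, haM, rfl⟩
    have h2' : (absMod (c'*a) m' : ℝ) ≤ (m' : ℝ) := by exact_mod_cast absMod_le_self (c'*a) m'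
    rw [div_le_one (by exact_mod_cast hm')]
    linarith
  have hge : kappa M ≥ (absMod (c*a) m0 : ℝ) / m0 := le_csSup hbddAbove hmem
  -- rewrite target
  have heq : ((absMod (c*a) m0 : ℝ) / m0) = ((a*x : ℕ) : ℝ) / (m : ℝ) := by
    have hgR : (g : ℝ) ≠ 0 := by positivity
    rw [← mul_div_mul_left _ _ hgR]
    congr 1
    · exact_mod_cast congrArg (Nat.cast (R := ℝ)) hva
    · exact_mod_cast congrArg (Nat.cast (R := ℝ)) hm0.symm
  rw [heq] at hge
  have hfin : (a*(a+1+i) : ℝ) / ((a:ℝ)+n) = ((a*x : ℕ) : ℝ) / (m : ℝ) := by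
    rw [hx, hm]; push_cast; ring
  rw [hfin]
  exact hge
end

section
/- Let a ≡ 0 (mod 4) with a ≥ 4, and let n ≡ a + l (mod 4a+1) for some 0 ≤ l ≤ 2a. Then with m = 4a+1 and x = 1, the minimum of |a|_m, |a+1|_m, |2a+1|_m, |3a+1|_m, |n|_m equals a; consequently κ({a, a+1, 2a+1, 3a+1, n}) ≥ a/(4a+1). -/
theorem stmt6 (a n : ℕ) (ha : 4 ≤ a) (ha4 : a % 4 = 0)
    (hn : ∃ l ≤ 2*a, n % (4*a+1) = (a + l) % (4*a+1)) :
    min (min (absMod a (4*a+1)) (absMod (a+1) (4*a+1)))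
      (min (absMod (2*a+1) (4*a+1))
        (min (absMod (3*a+1) (4*a+1)) (absMod n (4*a+1)))) = a ∧
    kappa {a, a+1, 2*a+1, 3*a+1, n} ≥ (a : ℝ) / (4*a+1) := by
  obtain ⟨l, hl, hmod⟩ := hn
  have h1 : a % (4*a+1) = a := Nat.mod_eq_of_lt (by omega)
  have h5 : n % (4*a+1) = a + l := by
    rw [hmod]; exact Nat.mod_eq_of_lt (by omega)
  have hA : absMod a (4*a+1) = a := by simp only [absMod, h1]; omega
  have hB : absMod (a+1) (4*a+1) = a+1 := by
    simp only [absMod, Nat.mod_eq_of_lt (show a+1 < 4*a+1 by omega)]; omega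
  have hC : absMod (2*a+1) (4*a+1) = 2*a := by
    simp only [absMod, Nat.mod_eq_of_lt (show 2*a+1 < 4*a+1 by omega)]; omega
  have hD : absMod (3*a+1) (4*a+1) = a := by
    simp only [absMod, Nat.mod_eq_of_lt (show 3*a+1 < 4*a+1 by omega)]; omega
  have hE' : a ≤ absMod n (4*a+1) := by simp only [absMod, h5]; omega
  constructor
  · rw [hA, hB, hC, hD]; omega
  · set M : Set ℕ := {a, a+1, 2*a+1, 3*a+1, n} with hM
    set T := {r : ℝ | ∃ k ∈ M, r = (absMod (1 * k) (4*a+1) : ℝ)} with hT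
    have hTa : (a : ℝ) ∈ T := ⟨a, by simp [hM], by rw [one_mul, hA]⟩
    have hTlb : ∀ r ∈ T, (a:ℝ) ≤ r := by
      rintro r ⟨k, hk, rfl⟩
      rw [one_mul]
      have hak : a ≤ absMod k (4*a+1) := by
        rcases hk with rfl | rfl | rfl | rfl | rfl <;> omega
      exact_mod_cast hak
    have hTinf : sInf T = a :=
      le_antisymm
        (csInf_le ⟨0, fun r hr => le_trans (by positivity) (hTlb r hr)⟩ hTa)
        (le_csInf ⟨_, hTa⟩ hTlb)
    have hmem : (a:ℝ)/((4*a+1 : ℕ):ℝ) ∈ {q : ℝ | ∃ c m : ℕ, 0 < m ∧ Nat.Coprime c m ∧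
        q = sInf {r : ℝ | ∃ k ∈ M, r = (absMod (c * k) m : ℝ)} / m} :=
      ⟨1, 4*a+1, by omega, Nat.coprime_one_left _, by rw [← hT, hTinf]⟩
    have hbdd : BddAbove {q : ℝ | ∃ c m : ℕ, 0 < m ∧ Nat.Coprime c m ∧
        q = sInf {r : ℝ | ∃ k ∈ M, r = (absMod (c * k) m : ℝ)} / m} := by
      refine ⟨1, ?_⟩
      rintro q ⟨c, m', hm', hcop, rfl⟩
      have hmem' : ((absMod (c*a) m' : ℕ) : ℝ) ∈
          {r : ℝ | ∃ k ∈ M, r = (absMod (c * k) m' : ℝ)} := ⟨a, by simp [hM], rfl⟩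
      have hle : sInf {r : ℝ | ∃ k ∈ M, r = (absMod (c * k) m' : ℝ)} ≤ (absMod (c*a) m' : ℝ) :=
        csInf_le ⟨0, by rintro r ⟨k, hk, rfl⟩; positivity⟩ hmem'
      have h2 : (absMod (c*a) m' : ℝ) ≤ m' := by
        have : absMod (c*a) m' ≤ m' := by simp only [absMod]; omega
        exact_mod_cast this
      rw [div_le_one (by exact_mod_cast hm')]
      exact hle.trans h2
    have hk : kappa M ≥ (a:ℝ)/((4*a+1 : ℕ):ℝ) := le_csSup hbdd hmem
    have hc : ((4*a+1 : ℕ):ℝ) = 4*(a:ℝ)+1 := by push_cast; ring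
    rw [hc] at hk
    exact hk
end

section
/- Let a ≡ 0 (mod 4) with a ≥ 4, i ≥ 0, and n = (8a+3)a + (4a+1)i + 2(2a+1) − a/2 + l with 0 ≤ l ≤ a/2 − 2. Then with m = 3a+1+n and x = 2a+2+i, the minimum of |a·x|_m, |(a+1)·x|_m, |(2a+1)·x|_m, |(3a+1)·x|_m, |n·x|_m equals a(2a+1+i) + a/2 + 1 + l; consequently κ({a, a+1, 2a+1, 3a+1, n}) ≥ (a(2a+1+i) + a/2 + 1 + l)/(3a+1+n). -/
lemma absMod_mul_left' (g u v : ℕ) : absMod (g*u) (g*v) = g * absMod u v := by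
  unfold absMod
  rw [Nat.mul_mod_mul_left, ← Nat.mul_sub, ← Nat.mul_min_mul_left]

lemma absMod_add_mul' (m q r : ℕ) : absMod (m*q + r) m = absMod r m := by
  unfold absMod; rw [Nat.mul_add_mod]

lemma absMod_small' {y m : ℕ} (h1 : y < m) (h2 : 2*y ≤ m) : absMod y m = y := by
  unfold absMod; rw [Nat.mod_eq_of_lt h1]; exact min_eq_left (by omega)

lemma absMod_large' {y m : ℕ} (h1 : y < m) (h2 : m ≤ 2*y) : absMod y m = m - y := by
  unfold absMod; rw [Nat.mod_eq_of_lt h1]; exact min_eq_right (by omega)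

lemma kappa_aux (b i l : ℕ) (hb : 1 ≤ b) (hl2 : l + 2 ≤ 2*b)
    (x m : ℕ)
    (hxdef : x = 2*(4*b)+2+i)
    (hmdef : m = 3*(4*b)+1+(128*(b*b)+16*(b*i)+26*b+2+i+l))
    (H1 : absMod (4*b*x) m = 32*(b*b)+4*(b*i)+8*b)
    (H2 : absMod ((4*b+1)*x) m = 32*(b*b)+4*(b*i)+16*b+2+i)
    (H3 : absMod ((2*(4*b)+1)*x) m = 64*(b*b)+8*(b*i)+14*b+1+l)
    (H4 : absMod ((3*(4*b)+1)*x) m = 32*(b*b)+4*(b*i)+6*b+1+l)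
    (H5 : absMod ((128*(b*b)+16*(b*i)+26*b+2+i+l)*x) m = 32*(b*b)+4*(b*i)+6*b+1+l) :
    kappa {4*b, 4*b+1, 2*(4*b)+1, 3*(4*b)+1, 128*(b*b)+16*(b*i)+26*b+2+i+l}
      ≥ ((32*(b*b)+4*(b*i)+6*b+1+l : ℕ) : ℝ) / ((m : ℕ) : ℝ) := by
  have hbi : i ≤ b*i := Nat.le_mul_of_pos_left i hb
  have hmpos : 0 < m := by
    rw [hmdef]; generalize b*b = B; generalize b*i = I; omega
  have hxpos : 0 < x := by rw [hxdef]; omega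
  set g := Nat.gcd x m with hgdef
  have hg : 0 < g := Nat.gcd_pos_of_pos_left m hxpos
  set c := x / g with hcdef
  set m' := m / g with hm'def
  have hgc : g * c = x := Nat.mul_div_cancel' (Nat.gcd_dvd_left x m)
  have hgm : g * m' = m := Nat.mul_div_cancel' (Nat.gcd_dvd_right x m)
  have hm'pos : 0 < m' := Nat.div_pos (Nat.le_of_dvd hmpos (Nat.gcd_dvd_right x m)) hg
  have hcop : Nat.Coprime c m' := Nat.coprime_div_gcd_div_gcd hg
  have key : ∀ k, g * absMod (c*k) m' = absMod (x*k) m := by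
    intro k
    conv_rhs => rw [← hgc, ← hgm]
    rw [mul_assoc, absMod_mul_left']
  set Mset : Set ℕ := {4*b, 4*b+1, 2*(4*b)+1, 3*(4*b)+1, 128*(b*b)+16*(b*i)+26*b+2+i+l}
    with hMset
  have hlow : ∀ k ∈ Mset, (32*(b*b)+4*(b*i)+6*b+1+l : ℕ) ≤ g * absMod (c*k) m' := by
    intro k hk
    simp only [hMset, Set.mem_insert_iff, Set.mem_singleton_iff] at hk
    rcases hk with rfl|rfl|rfl|rfl|rfl
    · rw [key, mul_comm x (4*b), H1]
      revert hb hl2 hbi; generalize b*b = B; generalize b*i = I; omega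
    · rw [key, mul_comm x (4*b+1), H2]
      revert hb hl2 hbi; generalize b*b = B; generalize b*i = I; omega
    · rw [key, mul_comm x (2*(4*b)+1), H3]
      revert hb hl2 hbi; generalize b*b = B; generalize b*i = I; omega
    · rw [key, mul_comm x (3*(4*b)+1), H4]
    · rw [key, mul_comm x (128*(b*b)+16*(b*i)+26*b+2+i+l), H5]
  have hbddR : BddBelow {r : ℝ | ∃ k ∈ Mset, r = (absMod (c*k) m' : ℝ)} :=
    ⟨0, by rintro r ⟨k, -, rfl⟩; exact Nat.cast_nonneg _⟩
  have hmem4 : ((absMod (c*(3*(4*b)+1)) m' : ℕ) : ℝ)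
      ∈ {r : ℝ | ∃ k ∈ Mset, r = (absMod (c*k) m' : ℝ)} :=
    ⟨3*(4*b)+1, by simp [hMset], rfl⟩
  have hr4 : ((absMod (c*(3*(4*b)+1)) m' : ℕ) : ℝ)
      = ((32*(b*b)+4*(b*i)+6*b+1+l : ℕ) : ℝ) / (g : ℝ) := by
    rw [eq_div_iff (by exact_mod_cast hg.ne' : (g:ℝ) ≠ 0), mul_comm]
    exact_mod_cast (by rw [key, mul_comm x (3*(4*b)+1), H4] :
      g * absMod (c*(3*(4*b)+1)) m' = 32*(b*b)+4*(b*i)+6*b+1+l)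
  have hInf : sInf {r : ℝ | ∃ k ∈ Mset, r = (absMod (c*k) m' : ℝ)}
      = ((32*(b*b)+4*(b*i)+6*b+1+l : ℕ) : ℝ) / (g : ℝ) := by
    refine le_antisymm (hr4 ▸ csInf_le hbddR hmem4) (le_csInf ⟨_, hmem4⟩ ?_)
    rintro r ⟨k, hk, rfl⟩
    rw [div_le_iff₀ (by exact_mod_cast hg : (0:ℝ) < (g:ℝ))]
    have h := hlow k hk
    calc ((32*(b*b)+4*(b*i)+6*b+1+l : ℕ) : ℝ)
        ≤ ((g * absMod (c*k) m' : ℕ) : ℝ) := by exact_mod_cast h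
      _ = (absMod (c*k) m' : ℝ) * g := by push_cast; ring
  have hbdd : BddAbove {q : ℝ | ∃ c0 m0 : ℕ, 0 < m0 ∧ Nat.Coprime c0 m0 ∧
      q = sInf {r : ℝ | ∃ k ∈ Mset, r = (absMod (c0 * k) m0 : ℝ)} / m0} := by
    refine ⟨1, ?_⟩
    rintro q ⟨c0, m0, hm0, -, rfl⟩
    have h1 : sInf {r : ℝ | ∃ k ∈ Mset, r = (absMod (c0 * k) m0 : ℝ)}
        ≤ (absMod (c0*(4*b)) m0 : ℝ) :=
      csInf_le ⟨0, by rintro r ⟨k, -, rfl⟩; exact Nat.cast_nonneg _⟩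
        ⟨4*b, by simp [hMset], rfl⟩
    have h2 : absMod (c0*(4*b)) m0 ≤ m0 :=
      le_trans (min_le_left _ _) (le_of_lt (Nat.mod_lt _ hm0))
    rw [div_le_one (by exact_mod_cast hm0)]
    exact le_trans h1 (by exact_mod_cast h2)
  have hq0 : ((32*(b*b)+4*(b*i)+6*b+1+l : ℕ) : ℝ) / ((m : ℕ) : ℝ)
      ∈ {q : ℝ | ∃ c0 m0 : ℕ, 0 < m0 ∧ Nat.Coprime c0 m0 ∧
      q = sInf {r : ℝ | ∃ k ∈ Mset, r = (absMod (c0 * k) m0 : ℝ)} / m0} := by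
    refine ⟨c, m', hm'pos, hcop, ?_⟩
    rw [hInf, div_div]
    congr 1
    exact_mod_cast hgm.symm
  exact le_csSup hbdd hq0

theorem stmt8 (a i l n : ℕ) (ha : 4 ≤ a) (ha4 : a % 4 = 0)
    (hl : l ≤ a/2 - 2)
    (hn : n = (8*a+3)*a + (4*a+1)*i + 2*(2*a+1) - a/2 + l) :
    min (min (absMod (a*(2*a+2+i)) (3*a+1+n)) (absMod ((a+1)*(2*a+2+i)) (3*a+1+n)))
      (min (absMod ((2*a+1)*(2*a+2+i)) (3*a+1+n))
        (min (absMod ((3*a+1)*(2*a+2+i)) (3*a+1+n)) (absMod (n*(2*a+2+i)) (3*a+1+n))))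
          = a*(2*a+1+i) + a/2 + 1 + l ∧
    kappa {a, a+1, 2*a+1, 3*a+1, n} ≥ (a*(2*a+1+i) + a/2 + 1 + l : ℝ) / (3*a+1+n) := by
  obtain ⟨b, rfl⟩ : ∃ b, a = 4*b := ⟨a/4, by omega⟩
  have hb : 1 ≤ b := by omega
  have hd : (4*b)/2 = 2*b := by omega
  rw [hd] at hl ⊢
  have hl2 : l + 2 ≤ 2*b := by omega
  have hbi : i ≤ b*i := Nat.le_mul_of_pos_left i hb
  have hn2 : n = 128*(b*b)+16*(b*i)+26*b+2+i+l := by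
    rw [hn, hd,
      show (8*(4*b)+3)*(4*b) + (4*(4*b)+1)*i + 2*(2*(4*b)+1)
        = 128*(b*b)+16*(b*i)+28*b+i+2 from by ring]
    revert hb hl2 hbi; generalize b*b = B; generalize b*i = I; omega
  rw [hn2]
  have H1 : absMod (4*b*(2*(4*b)+2+i)) (3*(4*b)+1+(128*(b*b)+16*(b*i)+26*b+2+i+l))
      = 32*(b*b)+4*(b*i)+8*b := by
    rw [show 4*b*(2*(4*b)+2+i) = 32*(b*b)+4*(b*i)+8*b from by ring]
    exact absMod_small'
      (by revert hb hl2 hbi; generalize b*b = B; generalize b*i = I; omega)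
      (by revert hb hl2 hbi; generalize b*b = B; generalize b*i = I; omega)
  have H2 : absMod ((4*b+1)*(2*(4*b)+2+i)) (3*(4*b)+1+(128*(b*b)+16*(b*i)+26*b+2+i+l))
      = 32*(b*b)+4*(b*i)+16*b+2+i := by
    rw [show (4*b+1)*(2*(4*b)+2+i) = 32*(b*b)+4*(b*i)+16*b+2+i from by ring]
    exact absMod_small'
      (by revert hb hl2 hbi; generalize b*b = B; generalize b*i = I; omega)
      (by revert hb hl2 hbi; generalize b*b = B; generalize b*i = I; omega)
  have H3 : absMod ((2*(4*b)+1)*(2*(4*b)+2+i)) (3*(4*b)+1+(128*(b*b)+16*(b*i)+26*b+2+i+l))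
      = 64*(b*b)+8*(b*i)+14*b+1+l := by
    rw [show (2*(4*b)+1)*(2*(4*b)+2+i) = 64*(b*b)+8*(b*i)+24*b+2+i from by ring,
      absMod_large'
        (by revert hb hl2 hbi; generalize b*b = B; generalize b*i = I; omega)
        (by revert hb hl2 hbi; generalize b*b = B; generalize b*i = I; omega)]
    revert hb hl2 hbi; generalize b*b = B; generalize b*i = I; omega
  have H4 : absMod ((3*(4*b)+1)*(2*(4*b)+2+i)) (3*(4*b)+1+(128*(b*b)+16*(b*i)+26*b+2+i+l))
      = 32*(b*b)+4*(b*i)+6*b+1+l := by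
    rw [show (3*(4*b)+1)*(2*(4*b)+2+i) = 96*(b*b)+12*(b*i)+32*b+2+i from by ring,
      absMod_large'
        (by revert hb hl2 hbi; generalize b*b = B; generalize b*i = I; omega)
        (by revert hb hl2 hbi; generalize b*b = B; generalize b*i = I; omega)]
    revert hb hl2 hbi; generalize b*b = B; generalize b*i = I; omega
  have H5 : absMod ((128*(b*b)+16*(b*i)+26*b+2+i+l)*(2*(4*b)+2+i))
      (3*(4*b)+1+(128*(b*b)+16*(b*i)+26*b+2+i+l)) = 32*(b*b)+4*(b*i)+6*b+1+l := by
    rw [show (128*(b*b)+16*(b*i)+26*b+2+i+l)*(2*(4*b)+2+i)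
        = (3*(4*b)+1+(128*(b*b)+16*(b*i)+26*b+2+i+l))*(8*b+1+i)
          + (32*(b*b)+4*(b*i)+6*b+1+l) from by ring,
      absMod_add_mul']
    exact absMod_small'
      (by revert hb hl2 hbi; generalize b*b = B; generalize b*i = I; omega)
      (by revert hb hl2 hbi; generalize b*b = B; generalize b*i = I; omega)
  constructor
  · rw [H1, H2, H3, H4, H5, min_self,
      min_eq_right (show 32*(b*b)+4*(b*i)+6*b+1+l ≤ 64*(b*b)+8*(b*i)+14*b+1+l from by
        revert hb hl2 hbi; generalize b*b = B; generalize b*i = I; omega),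
      min_eq_right (le_min
        (show 32*(b*b)+4*(b*i)+6*b+1+l ≤ 32*(b*b)+4*(b*i)+8*b from by
          revert hb hl2 hbi; generalize b*b = B; generalize b*i = I; omega)
        (show 32*(b*b)+4*(b*i)+6*b+1+l ≤ 32*(b*b)+4*(b*i)+16*b+2+i from by
          revert hb hl2 hbi; generalize b*b = B; generalize b*i = I; omega))]
    ring
  · rw [ge_iff_le]
    refine le_trans (le_of_eq ?_)
      (kappa_aux b i l hb hl2 _ _ rfl rfl H1 H2 H3 H4 H5)
    push_cast
    ring
end

section
/- Let a ≡ 2 (mod 4) with a ≥ 2, and let n be a positive integer with n ≢ 0 (mod 4) and n ∉ {a, a+1, 2a+1, 3a+1}. Taking m = 5a+2 (so m ≡ 0 mod 4) and x = m/4, each of a·x, (a+1)·x, (2a+1)·x, (3a+1)·x, n·x is congruent modulo m to ±m/4 or m/2, so the minimum of their values |·|_m is m/4; consequently κ({a, a+1, 2a+1, 3a+1, n}) ≥ 1/4. -/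
theorem stmt11 (a n m x : ℕ) (ha : 2 ≤ a) (ha4 : a % 4 = 2)
    (hnpos : 0 < n) (hn4 : n % 4 ≠ 0)
    (hnmem : n ∉ ({a, a+1, 2*a+1, 3*a+1} : Set ℕ))
    (hm : m = 5*a+2) (hx : x = m/4) :
    (∀ y ∈ ({a, a+1, 2*a+1, 3*a+1, n} : Set ℕ),
      absMod (y*x) m = m/4 ∨ absMod (y*x) m = m/2) ∧
    min (min (absMod (a*x) m) (absMod ((a+1)*x) m))
      (min (absMod ((2*a+1)*x) m)
        (min (absMod ((3*a+1)*x) m) (absMod (n*x) m))) = m/4 ∧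
    kappa {a, a+1, 2*a+1, 3*a+1, n} ≥ (1 : ℝ) / 4 := by
  have hm4 : m = 4 * x := by omega
  have hxpos : 0 < x := by omega
  -- key computation of y*x mod m
  have hmod : ∀ y : ℕ, (y * x) % m = (y % 4) * x := by
    intro y
    have h1 : y * x = (y % 4) * x + (y / 4) * m := by
      rw [hm4]
      have := Nat.div_add_mod y 4
      nlinarith
    have h2 : (y % 4) * x < m := by
      have h3 : y % 4 < 4 := Nat.mod_lt _ (by norm_num)
      rw [hm4]; nlinarith
    rw [h1, Nat.add_mul_mod_self_right, Nat.mod_eq_of_lt h2]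
  have key1 : ∀ y : ℕ, (y % 4 = 1 ∨ y % 4 = 3) → absMod (y * x) m = m / 4 := by
    intro y hy
    have := hmod y
    rcases hy with hr | hr <;> rw [hr] at this <;>
      simp only [absMod, this] <;> omega
  have key2 : ∀ y : ℕ, y % 4 = 2 → absMod (y * x) m = m / 2 := by
    intro y hy
    have := hmod y
    rw [hy] at this
    simp only [absMod, this]; omega
  have va : absMod (a * x) m = m / 2 := key2 a ha4
  have vb : absMod ((a + 1) * x) m = m / 4 := key1 _ (by omega)
  have vc : absMod ((2 * a + 1) * x) m = m / 4 := key1 _ (by omega)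
  have vd : absMod ((3 * a + 1) * x) m = m / 4 := key1 _ (by omega)
  have ve : absMod (n * x) m = m / 4 ∨ absMod (n * x) m = m / 2 := by
    have : n % 4 = 1 ∨ n % 4 = 2 ∨ n % 4 = 3 := by omega
    rcases this with h | h | h
    · exact Or.inl (key1 n (Or.inl h))
    · exact Or.inr (key2 n h)
    · exact Or.inl (key1 n (Or.inr h))
  refine ⟨?_, ?_, ?_⟩
  · intro y hy
    simp only [Set.mem_insert_iff, Set.mem_singleton_iff] at hy
    rcases hy with rfl | rfl | rfl | rfl | rfl
    · exact Or.inr va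
    · exact Or.inl vb
    · exact Or.inl vc
    · exact Or.inl vd
    · exact ve
  · rw [va, vb, vc, vd]
    rcases ve with h | h <;> rw [h] <;> omega
  · -- kappa bound, witness c = 1, m = 4
    set M : Set ℕ := {a, a+1, 2*a+1, 3*a+1, n} with hM
    set S : Set ℝ := {r : ℝ | ∃ k ∈ M, r = (absMod (1 * k) 4 : ℝ)} with hS
    have hone : (1 : ℝ) ∈ S := by
      refine ⟨a + 1, by simp [hM], ?_⟩
      have : absMod (1 * (a + 1)) 4 = 1 := by
        simp only [absMod, one_mul]; omega
      rw [this]; norm_num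
    have hlb : ∀ r ∈ S, (1 : ℝ) ≤ r := by
      rintro r ⟨k, hk, rfl⟩
      have hk4 : k % 4 ≠ 0 := by
        simp only [hM, Set.mem_insert_iff, Set.mem_singleton_iff] at hk
        rcases hk with rfl | rfl | rfl | rfl | rfl <;> omega
      have : 1 ≤ absMod (1 * k) 4 := by
        simp only [absMod, one_mul]; omega
      exact_mod_cast this
    have hinf : sInf S = 1 :=
      le_antisymm (csInf_le ⟨1, hlb⟩ hone) (le_csInf ⟨1, hone⟩ hlb)
    have hmem : (1 : ℝ) / 4 ∈ {q : ℝ | ∃ c m : ℕ, 0 < m ∧ Nat.Coprime c m ∧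
        q = sInf {r : ℝ | ∃ k ∈ M, r = (absMod (c * k) m : ℝ)} / m} := by
      refine ⟨1, 4, by norm_num, Nat.coprime_one_left 4, ?_⟩
      rw [← hS, hinf]; norm_num
    have hbdd : BddAbove {q : ℝ | ∃ c m : ℕ, 0 < m ∧ Nat.Coprime c m ∧
        q = sInf {r : ℝ | ∃ k ∈ M, r = (absMod (c * k) m : ℝ)} / m} := by
      refine ⟨1, ?_⟩
      rintro q ⟨c, m', hm'pos, _, rfl⟩
      have hamem : ((absMod (c * a) m' : ℕ) : ℝ) ∈
          {r : ℝ | ∃ k ∈ M, r = (absMod (c * k) m' : ℝ)} :=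
        ⟨a, by simp [hM], rfl⟩
      have hbb : BddBelow {r : ℝ | ∃ k ∈ M, r = (absMod (c * k) m' : ℝ)} := by
        refine ⟨0, ?_⟩
        rintro r ⟨k, hk, rfl⟩
        positivity
      have h1 : sInf {r : ℝ | ∃ k ∈ M, r = (absMod (c * k) m' : ℝ)} ≤
          ((absMod (c * a) m' : ℕ) : ℝ) := csInf_le hbb hamem
      have h2 : absMod (c * a) m' ≤ m' := by
        simp only [absMod]; omega
      have h3 : ((absMod (c * a) m' : ℕ) : ℝ) ≤ (m' : ℝ) := by exact_mod_cast h2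
      have hm'pos' : (0 : ℝ) < m' := by exact_mod_cast hm'pos
      rw [div_le_one hm'pos']
      linarith
    exact le_csSup hbdd hmem
end

section
/- Let a ≡ 3 (mod 4) with a ≥ 3, m = 5a+2, and x = (m−5)/4. Then a·x ≡ −(m−1)/2, (a+1)·x ≡ −(m+3)/4, (2a+1)·x ≡ (m−1)/4, and (3a+1)·x ≡ −(m−1)/4 modulo m; in particular |a·x|_m = (m−1)/2 and |(a+1)·x|_m = (m+3)/4 and |(2a+1)·x|_m = |(3a+1)·x|_m = (m−1)/4. -/
theorem stmt13 (a m x : ℕ) (ha : 3 ≤ a) (ha4 : a % 4 = 3)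
    (hm : m = 5*a+2) (hx : x = (m-5)/4) :
    ((a*x : ℕ) : ℤ) ≡ -(((m : ℤ)-1)/2) [ZMOD (m : ℤ)] ∧
    (((a+1)*x : ℕ) : ℤ) ≡ -(((m : ℤ)+3)/4) [ZMOD (m : ℤ)] ∧
    (((2*a+1)*x : ℕ) : ℤ) ≡ ((m : ℤ)-1)/4 [ZMOD (m : ℤ)] ∧
    (((3*a+1)*x : ℕ) : ℤ) ≡ -(((m : ℤ)-1)/4) [ZMOD (m : ℤ)] ∧
    absMod (a*x) m = (m-1)/2 ∧
    absMod ((a+1)*x) m = (m+3)/4 ∧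
    absMod ((2*a+1)*x) m = (m-1)/4 ∧
    absMod ((3*a+1)*x) m = (m-1)/4 := by
  obtain ⟨k, rfl⟩ : ∃ k, a = 4*k+3 := ⟨a/4, by omega⟩
  subst hm
  have hx' : x = 5*k+3 := by omega
  subst hx'
  have hmod1 : ((4*k+3)*(5*k+3)) % (5*(4*k+3)+2) = 10*k+9 := by
    have h : (4*k+3)*(5*k+3) = (10*k+9) + k*(5*(4*k+3)+2) := by ring
    rw [h, Nat.add_mul_mod_self_right, Nat.mod_eq_of_lt (by omega)]
  have hmod2 : ((4*k+3+1)*(5*k+3)) % (5*(4*k+3)+2) = 15*k+12 := by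
    have h : (4*k+3+1)*(5*k+3) = (15*k+12) + k*(5*(4*k+3)+2) := by ring
    rw [h, Nat.add_mul_mod_self_right, Nat.mod_eq_of_lt (by omega)]
  have hmod3 : ((2*(4*k+3)+1)*(5*k+3)) % (5*(4*k+3)+2) = 5*k+4 := by
    have h : (2*(4*k+3)+1)*(5*k+3) = (5*k+4) + (2*k+1)*(5*(4*k+3)+2) := by ring
    rw [h, Nat.add_mul_mod_self_right, Nat.mod_eq_of_lt (by omega)]
  have hmod4 : ((3*(4*k+3)+1)*(5*k+3)) % (5*(4*k+3)+2) = 15*k+13 := by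
    have h : (3*(4*k+3)+1)*(5*k+3) = (15*k+13) + (3*k+1)*(5*(4*k+3)+2) := by ring
    rw [h, Nat.add_mul_mod_self_right, Nat.mod_eq_of_lt (by omega)]
  have hc : ((5*(4*k+3)+2 : ℕ) : ℤ) = 20*(k:ℤ)+17 := by push_cast; ring
  have hd1 : (((5*(4*k+3)+2 : ℕ) : ℤ)-1)/2 = 10*(k:ℤ)+8 := by rw [hc]; omega
  have hd2 : (((5*(4*k+3)+2 : ℕ) : ℤ)+3)/4 = 5*(k:ℤ)+5 := by rw [hc]; omega
  have hd3 : (((5*(4*k+3)+2 : ℕ) : ℤ)-1)/4 = 5*(k:ℤ)+4 := by rw [hc]; omega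
  refine ⟨?_, ?_, ?_, ?_, ?_, ?_, ?_, ?_⟩
  · rw [hd1, Int.ModEq]
    push_cast
    rw [show (4*(k:ℤ)+3)*(5*k+3) = (10*k+9) + k*(5*(4*k+3)+2) by ring,
      Int.add_mul_emod_self_right,
      show -(10*(k:ℤ)+8) = (10*k+9) + (-1)*(5*(4*k+3)+2) by ring,
      Int.add_mul_emod_self_right]
  · rw [hd2, Int.ModEq]
    push_cast
    rw [show ((4*(k:ℤ)+3)+1)*(5*k+3) = (15*k+12) + k*(5*(4*k+3)+2) by ring,
      Int.add_mul_emod_self_right,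
      show -(5*(k:ℤ)+5) = (15*k+12) + (-1)*(5*(4*k+3)+2) by ring,
      Int.add_mul_emod_self_right]
  · rw [hd3, Int.ModEq]
    push_cast
    rw [show (2*(4*(k:ℤ)+3)+1)*(5*k+3) = (5*k+4) + (2*k+1)*(5*(4*k+3)+2) by ring,
      Int.add_mul_emod_self_right]
  · rw [hd3, Int.ModEq]
    push_cast
    rw [show (3*(4*(k:ℤ)+3)+1)*(5*k+3) = (15*k+13) + (3*k+1)*(5*(4*k+3)+2) by ring,
      Int.add_mul_emod_self_right,
      show -(5*(k:ℤ)+4) = (15*k+13) + (-1)*(5*(4*k+3)+2) by ring,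
      Int.add_mul_emod_self_right]
  · rw [absMod, hmod1]; omega
  · rw [absMod, hmod2]; omega
  · rw [absMod, hmod3]; omega
  · rw [absMod, hmod4]; omega
end

section
/- Let a ≥ 1 and let n satisfy n ≡ a + l (mod 4a+1) for some 0 ≤ l ≤ 2a, with a ≡ 0 or 1 (mod 4) and n ∉ {a, a+1, 2a+1, 3a+1}. Then taking c = 1 and m = 4a+1 in the Cantor–Gordon bound, each element m_k ∈ {a, a+1, 2a+1, 3a+1, n} satisfies |m_k|_{4a+1} ≥ a, so κ({a, a+1, 2a+1, 3a+1, n}) ≥ a/(4a+1). -/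
theorem stmt15 (a n : ℕ) (ha : 1 ≤ a) (ha4 : a % 4 = 0 ∨ a % 4 = 1)
    (hnmem : n ∉ ({a, a+1, 2*a+1, 3*a+1} : Set ℕ))
    (hl : ∃ l ≤ 2*a, n % (4*a+1) = (a + l) % (4*a+1)) :
    (∀ k ∈ ({a, a+1, 2*a+1, 3*a+1, n} : Set ℕ), a ≤ absMod k (4*a+1)) ∧
    kappa {a, a+1, 2*a+1, 3*a+1, n} ≥ (a : ℝ) / (4*a+1) := by
  obtain ⟨l, hl2a, hmod⟩ := hl
  have hnm : n % (4*a+1) = a + l := by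
    rw [hmod]; exact Nat.mod_eq_of_lt (by omega)
  have part1 : ∀ k ∈ ({a, a+1, 2*a+1, 3*a+1, n} : Set ℕ), a ≤ absMod k (4*a+1) := by
    intro k hk
    simp only [Set.mem_insert_iff, Set.mem_singleton_iff] at hk
    rcases hk with rfl | rfl | rfl | rfl | rfl
    · unfold absMod; rw [Nat.mod_eq_of_lt (by omega)]; omega
    · unfold absMod; rw [Nat.mod_eq_of_lt (by omega)]; omega
    · unfold absMod; rw [Nat.mod_eq_of_lt (by omega)]; omega
    · unfold absMod; rw [Nat.mod_eq_of_lt (by omega)]; omega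
    · unfold absMod; rw [hnm]; omega
  refine ⟨part1, ?_⟩
  set M : Set ℕ := {a, a+1, 2*a+1, 3*a+1, n} with hM
  set m : ℕ := 4*a+1 with hm
  set T : Set ℝ := {r : ℝ | ∃ k ∈ M, r = (absMod (1 * k) m : ℝ)} with hT
  have hTeq : ∀ r ∈ T, ∃ k ∈ M, r = (absMod k m : ℝ) := by
    intro r hr; obtain ⟨k, hk, rfl⟩ := hr; exact ⟨k, hk, by rw [one_mul]⟩
  have hTne : T.Nonempty := ⟨(absMod (1*a) m : ℝ), ⟨a, by simp [hM], rfl⟩⟩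
  have hTbdd : BddBelow T := ⟨0, fun r hr => by
    obtain ⟨k, hk, rfl⟩ := hr; positivity⟩
  have hInf_ge : (a : ℝ) ≤ sInf T := by
    apply le_csInf hTne
    intro r hr
    obtain ⟨k, hk, rfl⟩ := hTeq r hr
    exact_mod_cast part1 k hk
  have hq : sInf T / m ∈ {q : ℝ | ∃ c m' : ℕ, 0 < m' ∧ Nat.Coprime c m' ∧
      q = sInf {r : ℝ | ∃ k ∈ M, r = (absMod (c * k) m' : ℝ)} / m'} :=
    ⟨1, m, by omega, Nat.coprime_one_left m, rfl⟩
  have hbdd : BddAbove {q : ℝ | ∃ c m' : ℕ, 0 < m' ∧ Nat.Coprime c m' ∧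
      q = sInf {r : ℝ | ∃ k ∈ M, r = (absMod (c * k) m' : ℝ)} / m'} := by
    refine ⟨1, fun q hq => ?_⟩
    obtain ⟨c, m', hm', _, rfl⟩ := hq
    have h1 : sInf {r : ℝ | ∃ k ∈ M, r = (absMod (c * k) m' : ℝ)} ≤ (m' : ℝ) := by
      apply csInf_le_of_le (b := (absMod (c * a) m' : ℝ))
      · exact ⟨0, fun r hr => by obtain ⟨k, hk, rfl⟩ := hr; positivity⟩
      · exact ⟨a, by simp [hM], rfl⟩
      · have : absMod (c * a) m' ≤ m' := by
          unfold absMod; omega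
        exact_mod_cast this
    rw [div_le_one (by exact_mod_cast hm')]
    exact h1
  have hle : (a : ℝ) / m ≤ sInf T / m := by
    have hmpos : (0:ℝ) < m := by exact_mod_cast (by omega : 0 < m)
    gcongr
  calc (a : ℝ) / (4*a+1) = (a : ℝ) / m := by push_cast [hm]; ring_nf
    _ ≤ sInf T / m := hle
    _ ≤ kappa M := le_csSup hbdd hq
end

section
/- For a finite set M of positive integers, the Cantor–Gordon lower bound holds: for any positive integers c, m with gcd(c, m) = 1, there exists an M-set S (namely a union of residue classes modulo m) with asymptotic density at least (1/m)·min_{m_k ∈ M} |c·m_k|_m; hence μ(M) ≥ κ(M). -/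
open Finset Filter

section
variable (c m d : ℕ)

private def Pcond (s : ℕ) : Prop := d ≤ (c*s) % m ∧ (c*s) % m < 2*d

instance : DecidablePred (Pcond c m d) := fun s => by unfold Pcond; infer_instance

lemma count_base (hm : 0 < m) (hcop : Nat.Coprime c m) (h2d : 2*d ≤ m) :
    ((Finset.range m).filter (Pcond c m d)).card = d := by
  set e : ℕ → ℕ := fun s => (c*s) % m with he
  have hinj : Set.InjOn e (Finset.range m) := by
    intro s₁ h₁ s₂ h₂ h
    simp only [Finset.coe_range, Set.mem_Iio] at h₁ h₂
    have h3 : s₁ ≡ s₂ [MOD m] :=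
      Nat.ModEq.cancel_left_of_coprime (by simpa [Nat.coprime_comm] using hcop) h
    unfold Nat.ModEq at h3
    rwa [Nat.mod_eq_of_lt h₁, Nat.mod_eq_of_lt h₂] at h3
  have himg : (Finset.range m).image e = Finset.range m := by
    apply Finset.eq_of_subset_of_card_le
    · intro t ht
      simp only [Finset.mem_image] at ht
      obtain ⟨s, _, rfl⟩ := ht
      simp [he, Nat.mod_lt _ hm]
    · rw [Finset.card_image_of_injOn hinj]
  have hinj' : Set.InjOn e ((Finset.range m).filter (Pcond c m d)) :=
    hinj.mono (Finset.coe_subset.mpr (Finset.filter_subset _ _))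
  have himg2 : ((Finset.range m).filter (Pcond c m d)).image e = Finset.Ico d (2*d) := by
    apply Finset.Subset.antisymm
    · intro t ht
      simp only [Finset.mem_image, Finset.mem_filter] at ht
      obtain ⟨s, ⟨_, hp⟩, rfl⟩ := ht
      simp only [he, Finset.mem_Ico]
      exact hp
    · intro t ht
      simp only [Finset.mem_Ico] at ht
      have : t ∈ (Finset.range m).image e := by rw [himg]; simp; omega
      simp only [Finset.mem_image] at this
      obtain ⟨s, hs, rfl⟩ := this
      refine Finset.mem_image_of_mem e ?_
      simp only [Finset.mem_filter]
      exact ⟨hs, ht.1, ht.2⟩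
  have := Finset.card_image_of_injOn hinj'
  rw [himg2, Nat.card_Ico] at this
  omega

lemma count_block (hm : 0 < m) (hcop : Nat.Coprime c m) (h2d : 2*d ≤ m) (n : ℕ) :
    ((Finset.range (m*n)).filter (Pcond c m d)).card = d * n := by
  induction n with
  | zero => simp
  | succ n ih =>
    have hsplit : Finset.range (m*(n+1)) = Finset.range (m*n) ∪ Finset.Ico (m*n) (m*n+m) := by
      rw [Finset.range_eq_Ico, Finset.range_eq_Ico, Finset.Ico_union_Ico_eq_Ico (by omega) (by omega), Nat.mul_succ]
    rw [hsplit, Finset.filter_union, Finset.card_union_of_disjoint]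
    · have hblock : ((Finset.range m).filter (Pcond c m d)).card
          = ((Finset.Ico (m*n) (m*n+m)).filter (Pcond c m d)).card := by
        apply Finset.card_bij (fun j _ => m*n + j)
        · intro j hj
          simp only [Finset.mem_filter, Finset.mem_range] at hj
          simp only [Finset.mem_filter, Finset.mem_Ico]
          refine ⟨⟨by omega, by omega⟩, ?_⟩
          have heq : (c*(m*n+j)) % m = (c*j) % m := by
            have h1 : c*(m*n+j) = c*j + m*(c*n) := by ring
            rw [h1, Nat.add_mul_mod_self_left]
          unfold Pcond at hj ⊢
          rw [heq]; exact hj.2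
        · intro a ha b hb hab; omega
        · intro t ht
          simp only [Finset.mem_filter, Finset.mem_Ico] at ht
          refine ⟨t - m*n, ?_, by omega⟩
          simp only [Finset.mem_filter, Finset.mem_range]
          have heq : (c*(t - m*n)) % m = (c*t) % m := by
            have h1 : c*t = c*(t-m*n) + m*(c*n) := by
              have h2 : t = (t - m*n) + m*n := by omega
              nth_rewrite 1 [h2]; ring
            rw [h1, Nat.add_mul_mod_self_left]
          constructor
          · omega
          · unfold Pcond at ht ⊢; rw [heq]; exact ht.2
      rw [← hblock, count_base c m d hm hcop h2d, ih]; ring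
    · exact Finset.disjoint_filter_filter (by rw [Finset.range_eq_Ico]; exact Finset.Ico_disjoint_Ico_consecutive 0 (m*n) (m*n+m))

lemma count_bounds (hm : 0 < m) (hcop : Nat.Coprime c m) (h2d : 2*d ≤ m) (N : ℕ) :
    d * (N/m) ≤ ((Finset.range N).filter (Pcond c m d)).card ∧
    ((Finset.range N).filter (Pcond c m d)).card ≤ d * (N/m + 1) := by
  have hmono : ∀ a b : ℕ, a ≤ b → ((Finset.range a).filter (Pcond c m d)).card
      ≤ ((Finset.range b).filter (Pcond c m d)).card :=
    fun a b hab => Finset.card_le_card (Finset.filter_subset_filter _ (by simpa using hab))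
  have h1 := Nat.div_add_mod N m
  have h2 := Nat.mod_lt N hm
  have h3 : m*(N/m+1) = m*(N/m) + m := by ring
  constructor
  · calc d * (N/m) = ((Finset.range (m*(N/m))).filter (Pcond c m d)).card :=
          (count_block c m d hm hcop h2d _).symm
      _ ≤ _ := hmono _ _ (by omega)
  · calc ((Finset.range N).filter (Pcond c m d)).card
        ≤ ((Finset.range (m*(N/m+1))).filter (Pcond c m d)).card := hmono _ _ (by omega)
      _ = d * (N/m+1) := count_block c m d hm hcop h2d _

end

lemma CGmain (M : Finset ℕ) (hpos : ∀ k ∈ M, 0 < k) (hne : M.Nonempty) (c m : ℕ)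
    (hm : 0 < m) (hcop : Nat.Coprime c m) :
    ∃ S : Set ℕ, isMSet ↑M S ∧ ∃ dl : ℝ,
      Filter.Tendsto (fun x : ℕ => ((S ∩ Set.Iic x).ncard : ℝ) / x) Filter.atTop (nhds dl) ∧
      ((M.inf' hne (fun k => absMod (c*k) m) : ℕ) : ℝ) / m ≤ dl := by
  set d := M.inf' hne (fun k => absMod (c*k) m) with hd
  have hd_le : ∀ k ∈ M, d ≤ absMod (c*k) m := fun k hk => Finset.inf'_le _ hk
  have h2d : 2*d ≤ m := by
    obtain ⟨k0, hk0⟩ := hne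
    have h1 := hd_le k0 hk0
    have h2 : (c*k0) % m < m := Nat.mod_lt _ hm
    unfold absMod at h1
    omega
  rcases Nat.eq_zero_or_pos d with hd0 | hdpos
  · refine ⟨∅, by simp [isMSet], 0, ?_, by rw [hd0]; simp⟩
    have : (fun x : ℕ => (((∅ : Set ℕ) ∩ Set.Iic x).ncard : ℝ) / x) = fun _ => 0 := by
      funext x; simp
    rw [this]; exact tendsto_const_nhds
  · refine ⟨{s | Pcond c m d s}, ?_, (d:ℝ)/m, ?_, le_refl _⟩
    · -- isMSet
      intro x hx y hy hxy hk
      simp only [Finset.coe_sort_coe, Finset.mem_coe] at hk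
      have hk0 : 0 < x - y := hpos _ hk
      have hyx : y < x := by omega
      have hdk : d ≤ absMod (c*(x-y)) m := hd_le _ hk
      have hxe : c*x = c*y + c*(x-y) := by
        rw [← Nat.mul_add]; congr 1; omega
      have hab : (c*x) % m = ((c*y) % m + (c*(x-y)) % m) % m := by
        rw [hxe, Nat.add_mod]
      have ht : (c*(x-y)) % m < m := Nat.mod_lt _ hm
      have hx' : Pcond c m d x := hx
      have hy' : Pcond c m d y := hy
      unfold Pcond at hx' hy'
      unfold absMod at hdk
      set a := (c*x) % m
      set b := (c*y) % m
      set t := (c*(x-y)) % m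
      rcases lt_or_ge (b + t) m with hc1 | hc2
      · rw [Nat.mod_eq_of_lt hc1] at hab; omega
      · have : (b + t) % m = b + t - m := by
          rw [Nat.mod_eq_sub_mod hc2, Nat.mod_eq_of_lt (by omega)]
        rw [this] at hab; omega
    · -- tendsto
      have hEq : ∀ x : ℕ, (({s | Pcond c m d s} ∩ Set.Iic x).ncard : ℝ)
          = (((Finset.range (x+1)).filter (Pcond c m d)).card : ℝ) := by
        intro x
        congr 1
        rw [← Set.ncard_coe_finset]
        congr 1
        ext s
        simp [Set.mem_Iic, Nat.lt_succ_iff, And.comm]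
      have hm0 : (0:ℝ) < m := by exact_mod_cast hm
      have hlim : Tendsto (fun x : ℕ => (1:ℝ)/x) atTop (nhds 0) :=
        tendsto_one_div_atTop_nhds_zero_nat
      have h0 : Tendsto (fun x : ℕ => 1 + (1:ℝ)/x) atTop (nhds (1+0)) :=
        Tendsto.add tendsto_const_nhds hlim
      have h1 : Tendsto (fun x : ℕ => ((d:ℝ)/m)*(1 + 1/x)) atTop (nhds ((d:ℝ)/m * (1+0))) :=
        h0.const_mul _
      have h2 : Tendsto (fun x : ℕ => (d:ℝ)*(1/x)) atTop (nhds ((d:ℝ) * 0)) :=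
        hlim.const_mul _
      have hL : Tendsto (fun x : ℕ => ((d:ℝ)/m)*(1 + 1/x) - (d:ℝ)*(1/x)) atTop
          (nhds ((d:ℝ)/m)) := by simpa using h1.sub h2
      have hU : Tendsto (fun x : ℕ => ((d:ℝ)/m)*(1 + 1/x) + (d:ℝ)*(1/x)) atTop
          (nhds ((d:ℝ)/m)) := by simpa using h1.add h2
      apply tendsto_of_tendsto_of_tendsto_of_le_of_le' hL hU
      · -- lower bound eventually
        filter_upwards [Filter.eventually_ge_atTop 1] with x hx1
        rw [hEq x]
        set cnt := ((Finset.range (x+1)).filter (Pcond c m d)).card with hcnt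
        have hb := count_bounds c m d hm hcop h2d (x+1)
        set q := (x+1)/m with hq
        have hdm := Nat.div_add_mod (x+1) m
        have hmlt := Nat.mod_lt (x+1) hm
        rw [← hq] at hdm
        have hA : (d:ℝ) * q ≤ cnt := by exact_mod_cast hb.1
        have hB : ((x:ℝ)+1) ≤ (m:ℝ)*q + m := by
          have : x + 1 ≤ m*q + m := by omega
          exact_mod_cast this
        have hx0 : (0:ℝ) < x := by
          have : (1:ℕ) ≤ x := hx1
          exact_mod_cast Nat.lt_of_lt_of_le Nat.zero_lt_one this
        have key : (d:ℝ)*((x:ℝ)+1) - d*m ≤ m*cnt := by nlinarith [hA, hB, hm0, (show (0:ℝ) ≤ (d:ℝ) by positivity)]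
        have heq2 : ((d:ℝ)/m)*(1 + 1/x) - (d:ℝ)*(1/x) = ((d:ℝ)*((x:ℝ)+1) - d*m)/(m*x) := by
          field_simp
        rw [heq2, div_le_div_iff₀ (by positivity) hx0]
        nlinarith [key, hx0.le]
      · -- upper bound eventually
        filter_upwards [Filter.eventually_ge_atTop 1] with x hx1
        rw [hEq x]
        set cnt := ((Finset.range (x+1)).filter (Pcond c m d)).card with hcnt
        have hb := count_bounds c m d hm hcop h2d (x+1)
        set q := (x+1)/m with hq
        have hdm := Nat.div_add_mod (x+1) m
        rw [← hq] at hdm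
        have hA : (cnt:ℝ) ≤ (d:ℝ) * (q+1) := by exact_mod_cast hb.2
        have hB : (m:ℝ)*q ≤ (x:ℝ)+1 := by
          have : m*q ≤ x + 1 := by omega
          exact_mod_cast this
        have hx0 : (0:ℝ) < x := by
          have : (1:ℕ) ≤ x := hx1
          exact_mod_cast Nat.lt_of_lt_of_le Nat.zero_lt_one this
        have key : (m:ℝ)*cnt ≤ (d:ℝ)*((x:ℝ)+1) + d*m := by
          nlinarith [hA, hB, hm0, (show (0:ℝ) ≤ (d:ℝ) by positivity)]
        have heq2 : ((d:ℝ)/m)*(1 + 1/x) + (d:ℝ)*(1/x) = ((d:ℝ)*((x:ℝ)+1) + d*m)/(m*x) := by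
          field_simp
        rw [heq2, div_le_div_iff₀ hx0 (by positivity)]
        nlinarith [key, hx0.le]

lemma kappa_le_mu (M : Finset ℕ) (hpos : ∀ k ∈ M, 0 < k) (hne : M.Nonempty) :
    kappa ↑M ≤ mu ↑M := by
  set Dset := {d : ℝ | ∃ S : Set ℕ, isMSet ↑M S ∧ d = upperDensity S} with hD
  have hzero : (0:ℝ) ∈ Dset := by
    refine ⟨∅, by simp [isMSet], ?_⟩
    unfold upperDensity
    have : (fun x : ℕ => (((∅ : Set ℕ) ∩ Set.Iic x).ncard : ℝ) / x) = fun _ => (0:ℝ) := by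
      funext x; simp
    rw [this, Filter.limsup_const]
  have hbdd : BddAbove Dset := by
    refine ⟨2, ?_⟩
    rintro dv ⟨S, _, rfl⟩
    unfold upperDensity
    apply Filter.limsup_le_of_le
    · exact Filter.isCoboundedUnder_le_of_le atTop (x := 0)
        (fun x => by positivity)
    · filter_upwards [Filter.eventually_ge_atTop 1] with x hx1
      have hsub : (S ∩ Set.Iic x).ncard ≤ (Set.Iic x).ncard :=
        Set.ncard_le_ncard Set.inter_subset_right (Set.finite_Iic x)
      have hIic : (Set.Iic x).ncard = x + 1 := by
        rw [← Finset.coe_Iic, Set.ncard_coe_finset, Nat.card_Iic]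
      have hx0 : (0:ℝ) < x := by exact_mod_cast Nat.lt_of_lt_of_le Nat.zero_lt_one hx1
      rw [div_le_iff₀ hx0]
      have : ((S ∩ Set.Iic x).ncard : ℝ) ≤ (x:ℝ) + 1 := by
        have h4 : (S ∩ Set.Iic x).ncard ≤ x + 1 := hIic ▸ hsub
        exact_mod_cast h4
      have hx1' : (1:ℝ) ≤ x := by exact_mod_cast hx1
      nlinarith
  rw [kappa, mu, ← hD]
  apply Real.sSup_le
  · rintro q ⟨c, m, hm, hcop, rfl⟩
    have hinf : sInf {r : ℝ | ∃ k ∈ (↑M : Set ℕ), r = (absMod (c * k) m : ℝ)}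
        = ((M.inf' hne (fun k => absMod (c*k) m) : ℕ) : ℝ) := by
      apply le_antisymm
      · obtain ⟨k0, hk0, hk0eq⟩ := Finset.exists_mem_eq_inf' hne (fun k => absMod (c*k) m)
        exact csInf_le ⟨0, by rintro r ⟨k, hk, rfl⟩; positivity⟩
          ⟨k0, by simpa using hk0, by rw [hk0eq]⟩
      · apply le_csInf
        · obtain ⟨k0, hk0⟩ := hne
          exact ⟨_, k0, by simpa using hk0, rfl⟩
        · rintro r ⟨k, hk, rfl⟩
          exact_mod_cast Finset.inf'_le _ (by simpa using hk)
    rw [hinf]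
    obtain ⟨S, hMS, dl, htend, hle⟩ := CGmain M hpos hne c m hm hcop
    refine le_trans hle ?_
    have hdl : dl = upperDensity S := (htend.limsup_eq).symm
    exact le_csSup hbdd ⟨S, hMS, hdl⟩
  · exact le_csSup hbdd hzero

theorem stmt16 (M : Finset ℕ) (hpos : ∀ k ∈ M, 0 < k) (hne : M.Nonempty) :
    (∀ c m : ℕ, 0 < m → Nat.Coprime c m →
      ∃ S : Set ℕ, isMSet ↑M S ∧
        ∃ d : ℝ,
          Filter.Tendsto (fun x : ℕ => ((S ∩ Set.Iic x).ncard : ℝ) / x)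
            Filter.atTop (nhds d) ∧
          ((M.inf' hne (fun k => absMod (c*k) m) : ℕ) : ℝ) / m ≤ d) ∧
    kappa ↑M ≤ mu ↑M :=
  ⟨fun c m hm hcop => CGmain M hpos hne c m hm hcop, kappa_le_mu M hpos hne⟩
end

section
/- Haralambis' criterion: let M be a set of positive integers and α ∈ [0,1]. If for every M-set S with 0 ∈ S there exists a positive integer k such that |S ∩ {0, 1, ..., k}| ≤ (k+1)α, then μ(M) ≤ α. -/
open Filter Set

open Classical in
/-- number of elements of `S` in `[a,b]`. -/
noncomputable def cnt (S : Set ℕ) (a b : ℕ) : ℕ :=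
  ((Finset.Icc a b).filter (fun i => i ∈ S)).card

lemma cnt_split (S : Set ℕ) {a b c : ℕ} (h1 : a ≤ b + 1) (h2 : b ≤ c) :
    cnt S a c = cnt S a b + cnt S (b+1) c := by
  classical
  unfold cnt
  have hIcc : Finset.Icc a c = Finset.Icc a b ∪ Finset.Icc (b+1) c := by
    ext i
    simp only [Finset.mem_union, Finset.mem_Icc]
    omega
  rw [hIcc, Finset.filter_union, Finset.card_union_of_disjoint]
  apply Finset.disjoint_filter_filter
  rw [Finset.disjoint_left]
  intro i hi hi'
  simp only [Finset.mem_Icc] at hi hi'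
  omega

lemma cnt_le (S : Set ℕ) (a b : ℕ) : cnt S a b ≤ b + 1 - a := by
  classical
  calc cnt S a b ≤ (Finset.Icc a b).card := Finset.card_filter_le _ _
  _ = b + 1 - a := Nat.card_Icc a b

lemma cnt_empty (S : Set ℕ) (x : ℕ) : cnt S (x+1) x = 0 := by
  classical
  unfold cnt
  rw [Finset.Icc_eq_empty (by omega)]
  simp

lemma cnt_single_not (S : Set ℕ) (a : ℕ) (ha : a ∉ S) : cnt S a a = 0 := by
  classical
  unfold cnt
  simp only [Finset.Icc_self]
  rw [Finset.card_eq_zero, Finset.filter_eq_empty_iff]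
  simpa using ha
lemma ncard_shift (S : Set ℕ) (a j : ℕ) :
    ({m : ℕ | a + m ∈ S} ∩ Set.Iic j).ncard = cnt S a (a + j) := by
  classical
  have : {m : ℕ | a + m ∈ S} ∩ Set.Iic j
      = ↑((Finset.Iic j).filter (fun m => a + m ∈ S)) := by
    ext m
    simp [Set.mem_Iic]
    tauto
  rw [this, Set.ncard_coe_finset]
  unfold cnt
  apply Finset.card_bij (fun m _ => a + m)
  · intro m hm
    simp only [Finset.mem_filter, Finset.mem_Iic] at hm
    simp only [Finset.mem_filter, Finset.mem_Icc]
    exact ⟨⟨by omega, by omega⟩, hm.2⟩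
  · intro m hm m' hm' he; omega
  · intro i hi
    simp only [Finset.mem_filter, Finset.mem_Icc] at hi
    refine ⟨i - a, ?_, by omega⟩
    simp only [Finset.mem_filter, Finset.mem_Iic]
    have hia : a + (i - a) = i := by omega
    rw [hia]
    exact ⟨by omega, hi.2⟩

lemma ncard_Iic (S : Set ℕ) (x : ℕ) : (S ∩ Set.Iic x).ncard = cnt S 0 x := by
  have := ncard_shift S 0 x
  simpa using this

lemma select (S : Set ℕ) (α β : ℝ) (hα0 : 0 ≤ α) (x : ℕ)
    (hbig : 0 < (β - α) * x - α) (hcnt : β * x ≤ (cnt S 0 x : ℝ)) :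
    ∃ a : ℕ, a ≤ x ∧ a ∈ S ∧ (β - α) * x - α ≤ (x : ℝ) - a + 1 ∧
      ∀ b : ℕ, a ≤ b → b ≤ x → ((b:ℝ) - a + 1) * α < (cnt S a b : ℝ) := by
  classical
  set h : ℕ → ℝ := fun t => (cnt S t x : ℝ) - α * ((x:ℝ) + 1 - t) with hh
  obtain ⟨m, hm, hmax⟩ := Finset.exists_max_image (Finset.Iic (x+1)) h ⟨0, by simp⟩
  set F : Finset ℕ := (Finset.Iic (x+1)).filter (fun t => h m ≤ h t) with hF
  have hFne : F.Nonempty := ⟨m, by simp only [hF, Finset.mem_filter]; exact ⟨hm, le_refl _⟩⟩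
  set a : ℕ := F.max' hFne with ha
  have haF : a ∈ F := F.max'_mem hFne
  have haIic : a ≤ x + 1 := by
    have := (Finset.mem_filter.mp haF).1; simpa using this
  have hma : h m ≤ h a := (Finset.mem_filter.mp haF).2
  have hamax : ∀ u, u ≤ x + 1 → h u ≤ h a := by
    intro u hu
    exact le_trans (hmax u (by simpa using hu)) hma
  have hstrict : ∀ t, t ≤ x + 1 → a < t → h t < h a := by
    intro t ht hat
    by_contra hc
    push_neg at hc
    have htm : h m ≤ h t := le_trans hma hc
    have htF : t ∈ F := by
      simp only [hF, Finset.mem_filter, Finset.mem_Iic]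
      exact ⟨ht, htm⟩
    have := F.le_max' t htF
    omega
  have h0 : (β - α) * x - α ≤ h 0 := by
    simp only [hh]
    push_cast
    nlinarith [hcnt]
  have hx1 : h (x+1) = 0 := by
    simp only [hh, cnt_empty]
    push_cast
    ring
  have h0a : h 0 ≤ h a := hamax 0 (by omega)
  have hax : a ≤ x := by
    by_contra hc
    have hax1 : a = x + 1 := by omega
    rw [hax1] at h0a
    rw [hx1] at h0a
    linarith
  have haS : a ∈ S := by
    by_contra hc
    have hsplit : cnt S a x = cnt S a a + cnt S (a+1) x := cnt_split S (by omega) hax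
    have hz : cnt S a a = 0 := cnt_single_not S a hc
    have he1 : h (a+1) = h a + α := by
      simp only [hh, hsplit, hz]
      push_cast
      ring
    have := hstrict (a+1) (by omega) (by omega)
    linarith
  refine ⟨a, hax, haS, ?_, ?_⟩
  · have hle : (cnt S a x : ℝ) ≤ (x:ℝ) + 1 - a := by
      have h1 := cnt_le S a x
      have h2 : ((x + 1 - a : ℕ) : ℝ) = (x:ℝ) + 1 - a := by
        push_cast [Nat.cast_sub (by omega : a ≤ x + 1)]
        ring
      calc (cnt S a x : ℝ) ≤ ((x + 1 - a : ℕ) : ℝ) := by exact_mod_cast h1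
        _ = (x:ℝ) + 1 - a := h2
    have hcast : (a:ℝ) ≤ x := by exact_mod_cast hax
    have hha : h a ≤ (cnt S a x : ℝ) := by
      simp only [hh]
      nlinarith
    linarith [h0, h0a]
  · intro b hab hbx
    have hsplit : cnt S a x = cnt S a b + cnt S (b+1) x := cnt_split S (by omega) hbx
    have hs : h (b+1) < h a := hstrict (b+1) (by omega) (by omega)
    have he : (cnt S a b : ℝ) = h a - h (b+1) + α * ((b:ℝ) + 1 - a) := by
      simp only [hh, hsplit]
      push_cast
      ring
    rw [he]
    nlinarith

lemma key (M : Set ℕ) (hpos : ∀ k ∈ M, 0 < k) (α : ℝ) (hα0 : 0 ≤ α)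
    (h : ∀ S : Set ℕ, isMSet M S → 0 ∈ S →
      ∃ k : ℕ, 0 < k ∧ ((S ∩ Set.Iic k).ncard : ℝ) ≤ (k+1)*α)
    (S : Set ℕ) (hS : isMSet M S) : upperDensity S ≤ α := by
  by_contra hcon
  push_neg at hcon
  set f : ℕ → ℝ := fun x => ((S ∩ Set.Iic x).ncard : ℝ) / x with hf
  have hcL : α < Filter.limsup f Filter.atTop := hcon
  set L := Filter.limsup f Filter.atTop with hL
  set β : ℝ := (α + L)/2 with hβ
  have hαβ : α < β := by rw [hβ]; linarith
  have hβL : β < L := by rw [hβ]; linarith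
  have hcb : Filter.atTop.IsCoboundedUnder (· ≤ ·) f :=
    Filter.isCoboundedUnder_le_of_le Filter.atTop
      (x := 0) (fun i => by positivity)
  have hfreq : ∃ᶠ x in Filter.atTop, β < f x :=
    Filter.frequently_lt_of_lt_limsup hcb hβL
  have hfreq' : ∀ N : ℕ, ∃ x ≥ N, β < f x := Filter.frequently_atTop.mp hfreq
  -- step: for each n, a translate of S starting in S with large initial counts
  have hstep : ∀ n : ℕ, ∃ a : ℕ, a ∈ S ∧
      ∀ j : ℕ, j ≤ n → ((j:ℝ)+1)*α < (({m : ℕ | a + m ∈ S} ∩ Set.Iic j).ncard : ℝ) := by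
    intro n
    obtain ⟨N₀, hN₀⟩ := exists_nat_gt (((n:ℝ) + 2 + α)/(β - α))
    obtain ⟨x, hxN, hfx⟩ := hfreq' (max 1 N₀)
    have hx1 : 1 ≤ x := le_trans (le_max_left _ _) hxN
    have hxN₀ : (N₀ : ℝ) ≤ x := by exact_mod_cast le_trans (le_max_right _ _) hxN
    have hβα : 0 < β - α := by linarith
    have hwinbig : (n:ℝ) + 2 ≤ (β - α) * x - α := by
      have h1 : ((n:ℝ) + 2 + α)/(β - α) < (x:ℝ) := lt_of_lt_of_le hN₀ hxN₀
      have h2 : (n:ℝ) + 2 + α < (β - α) * x := by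
        rw [div_lt_iff₀ hβα] at h1
        nlinarith
      linarith
    have hxpos : (0:ℝ) < x := by exact_mod_cast hx1
    have hcnt : β * x ≤ (cnt S 0 x : ℝ) := by
      have : β < ((S ∩ Set.Iic x).ncard : ℝ) / x := hfx
      rw [lt_div_iff₀ hxpos] at this
      rw [← ncard_Iic S x]
      linarith
    obtain ⟨a, hax, haS, hwin, hmain⟩ := select S α β hα0 x (by linarith) hcnt
    refine ⟨a, haS, ?_⟩
    intro j hj
    have hcast : (a:ℝ) ≤ x := by exact_mod_cast hax
    have hajx : a + j ≤ x := by
      have hj' : (j:ℝ) ≤ n := by exact_mod_cast hj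
      have : (a:ℝ) + j ≤ (x:ℝ) := by linarith [hwin]
      exact_mod_cast this
    have := hmain (a + j) (Nat.le_add_right a j) hajx
    rw [ncard_shift]
    have he : (((a:ℕ) + j : ℕ) : ℝ) - a + 1 = (j:ℝ) + 1 := by push_cast; ring
    rw [he] at this
    linarith
  choose aa haaS haacnt using hstep
  set Sn : ℕ → Set ℕ := fun n => {m : ℕ | aa n + m ∈ S} with hSn
  have h0Sn : ∀ n, 0 ∈ Sn n := by
    intro n
    simp only [hSn, Set.mem_setOf_eq, add_zero]
    exact haaS n
  -- ultrafilter limit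
  obtain ⟨U, hU⟩ := Ultrafilter.exists_le (Filter.cofinite : Filter ℕ)
  set T : Set ℕ := {m : ℕ | {n : ℕ | m ∈ Sn n} ∈ U} with hT
  have h0T : 0 ∈ T := by
    simp only [hT, Set.mem_setOf_eq]
    have : {n : ℕ | 0 ∈ Sn n} = Set.univ := by
      ext n; simp [h0Sn n]
    rw [this]
    exact Filter.univ_mem
  have hMT : isMSet M T := by
    intro p hp q hq hpq
    rcases Nat.lt_or_ge p q with hlt | hge
    · have : p - q = 0 := by omega
      rw [this]
      intro hM
      exact absurd (hpos 0 hM) (lt_irrefl 0)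
    · have hmem : ({n : ℕ | p ∈ Sn n} ∩ {n : ℕ | q ∈ Sn n}) ∈ U :=
        Filter.inter_mem hp hq
      obtain ⟨n, hn⟩ := Filter.nonempty_of_mem hmem
      have hpn : aa n + p ∈ S := hn.1
      have hqn : aa n + q ∈ S := hn.2
      have := hS (aa n + p) hpn (aa n + q) hqn (by omega)
      have he : aa n + p - (aa n + q) = p - q := by omega
      rwa [he] at this
  have hcount : ∀ j : ℕ, ((j:ℝ)+1)*α < ((T ∩ Set.Iic j).ncard : ℝ) := by
    intro j
    set G : ℕ → Set ℕ := fun m => {n : ℕ | m ∈ Sn n ↔ m ∈ T} with hG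
    have hGU : ∀ m, G m ∈ U := by
      intro m
      by_cases hm : m ∈ T
      · refine Filter.mem_of_superset hm ?_
        intro n hn
        exact ⟨fun _ => hm, fun _ => hn⟩
      · refine Filter.mem_of_superset (Ultrafilter.compl_mem_iff_notMem.mpr hm) ?_
        intro n hn
        exact ⟨fun h' => absurd h' hn, fun h' => absurd h' hm⟩
    have hBig : {n : ℕ | j ≤ n} ∈ U := by
      apply hU
      rw [Filter.mem_cofinite]
      have hcompl : {n : ℕ | j ≤ n}ᶜ = Set.Iio j := by
        ext n
        simp only [Set.mem_compl_iff, Set.mem_setOf_eq, Set.mem_Iio]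
        omega
      rw [hcompl]
      exact Set.finite_Iio j
    have hInt : ({n : ℕ | j ≤ n} ∩ ⋂ m ∈ Set.Iic j, G m) ∈ U := by
      apply Filter.inter_mem hBig
      rw [Filter.biInter_mem (Set.finite_Iic j)]
      intro m _
      exact hGU m
    obtain ⟨n, hn1, hn2⟩ := Filter.nonempty_of_mem hInt
    have hnG : ∀ m : ℕ, m ≤ j → (m ∈ Sn n ↔ m ∈ T) :=
      fun m hm => Set.mem_iInter₂.mp hn2 m hm
    have hagree : T ∩ Set.Iic j = Sn n ∩ Set.Iic j := by
      ext m
      simp only [Set.mem_inter_iff, Set.mem_Iic]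
      constructor
      · rintro ⟨hmT, hmj⟩
        exact ⟨(hnG m hmj).mpr hmT, hmj⟩
      · rintro ⟨hmS, hmj⟩
        exact ⟨(hnG m hmj).mp hmS, hmj⟩
    rw [hagree]
    exact haacnt n j hn1
  obtain ⟨k, hk0, hkle⟩ := h T hMT h0T
  have := hcount k
  linarith

theorem stmt17 (M : Set ℕ) (hpos : ∀ k ∈ M, 0 < k)
    (α : ℝ) (hα : α ∈ Set.Icc (0:ℝ) 1)
    (h : ∀ S : Set ℕ, isMSet M S → 0 ∈ S →
      ∃ k : ℕ, 0 < k ∧ ((S ∩ Set.Iic k).ncard : ℝ) ≤ (k+1)*α) :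
    mu M ≤ α := by
  apply Real.sSup_le
  · rintro d ⟨S, hS, rfl⟩
    exact key M hpos α hα.1 h S hS
  · exact hα.1
end

section
/- For a ≥ 2, the set B = {0, a, a+1, 2a+1} together with the sets A_t = {t, a+1+t, 2a+1+t} for 1 ≤ t ≤ a−1 forms a partition of {0, 1, ..., 3a}; moreover, if S is a set of integers containing 0 with no two elements differing by a, a+1, or 2a+1, then S meets B in exactly one element and meets each A_t in at most one element. -/
theorem stmt18 (a : ℕ) (ha : 2 ≤ a)
    (B : Set ℤ) (hB : B = {0, (a : ℤ), (a : ℤ)+1, 2*(a : ℤ)+1})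
    (A : ℕ → Set ℤ) (hA : ∀ t, A t = {(t : ℤ), (a : ℤ)+1+t, 2*(a : ℤ)+1+t}) :
    (B ∪ ⋃ t ∈ Set.Icc 1 (a-1), A t) = Set.Icc (0 : ℤ) (3*a) ∧
    (∀ t ∈ Set.Icc 1 (a-1), Disjoint B (A t)) ∧
    (∀ t ∈ Set.Icc 1 (a-1), ∀ s ∈ Set.Icc 1 (a-1), t ≠ s → Disjoint (A t) (A s)) ∧
    (∀ S : Set ℤ, 0 ∈ S →
      (∀ x ∈ S, ∀ y ∈ S, x - y ∉ ({(a : ℤ), (a : ℤ)+1, 2*(a : ℤ)+1} : Set ℤ)) →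
      (S ∩ B).ncard = 1 ∧ ∀ t ∈ Set.Icc 1 (a-1), (S ∩ A t).ncard ≤ 1) := by
  refine ⟨?_, ?_, ?_, ?_⟩
  · ext n
    simp only [Set.mem_union, Set.mem_iUnion, hB, hA, Set.mem_Icc, Set.mem_insert_iff,
      Set.mem_singleton_iff, exists_prop]
    constructor
    · rintro (h | ⟨t, ht, h⟩) <;> omega
    · rintro ⟨h0, h3⟩
      by_cases hb : n = 0 ∨ n = (a:ℤ) ∨ n = (a:ℤ)+1 ∨ n = 2*(a:ℤ)+1
      · exact Or.inl hb
      · right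
        push_neg at hb
        have hcase : (0 < n ∧ n < (a:ℤ)) ∨ ((a:ℤ)+1 < n ∧ n < 2*(a:ℤ)+1) ∨
            (2*(a:ℤ)+1 < n ∧ n ≤ 3*(a:ℤ)) := by omega
        rcases hcase with ⟨h1, h2⟩ | ⟨h1, h2⟩ | ⟨h1, h2⟩
        · exact ⟨n.toNat, by omega, by omega⟩
        · exact ⟨(n - ((a:ℤ)+1)).toNat, by omega, by omega⟩
        · exact ⟨(n - (2*(a:ℤ)+1)).toNat, by omega, by omega⟩
  · intro t ht
    rw [Set.disjoint_left]
    intro x hx hx'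
    rw [hB] at hx; rw [hA] at hx'
    simp only [Set.mem_insert_iff, Set.mem_singleton_iff, Set.mem_Icc] at hx hx' ht
    omega
  · intro t ht s hs hts
    rw [Set.disjoint_left]
    intro x hx hx'
    rw [hA] at hx hx'
    simp only [Set.mem_insert_iff, Set.mem_singleton_iff, Set.mem_Icc] at hx hx' ht hs
    omega
  · intro S h0 hS
    constructor
    · have hSB : S ∩ B = {0} := by
        ext x
        simp only [Set.mem_inter_iff, hB, Set.mem_insert_iff, Set.mem_singleton_iff]
        constructor
        · rintro ⟨hx, h⟩
          have h1 := hS x hx 0 h0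
          simp only [Set.mem_insert_iff, Set.mem_singleton_iff] at h1
          omega
        · rintro rfl
          exact ⟨h0, Or.inl rfl⟩
      rw [hSB, Set.ncard_singleton]
    · intro t ht
      have hsub : (S ∩ A t).Subsingleton := by
        rintro x ⟨hxS, hxA⟩ y ⟨hyS, hyA⟩
        rw [hA] at hxA hyA
        simp only [Set.mem_insert_iff, Set.mem_singleton_iff] at hxA hyA
        have h1 := hS x hxS y hyS
        have h2 := hS y hyS x hxS
        simp only [Set.mem_insert_iff, Set.mem_singleton_iff] at h1 h2
        omega
      rcases hsub.eq_empty_or_singleton with h | ⟨x, h⟩ <;> simp [h]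
end
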